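/- arXiv:2402.18457 — 9 statements merged into one kernel-verified Lean document; each statement's English description precedes it below -/
import Mathlib

section
/- Let G be a finite simple graph with adjacency matrix M (over the rationals), and let A be the colour adjacency matrix of some perfect m-colouring of G (regarded as a matrix over the rationals). Then the characteristic polynomial of A divides the characteristic polynomial of M. In particular, each eigenvalue of A is an eigenvalue of M. -/
/-- The `d`-cube graph: vertices are `{0,1}^d` (as `Fin d → Bool`), two vertices
are adjacent iff they differ in exactly one coordinate. -/
def cubeGraph (d : ℕ) : SimpleGraph (Fin d → Bool) where
  Adj x y := ∃! i, x i ≠ y i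
  symm := by
    constructor
    rintro x y ⟨i, hi, hu⟩
    exact ⟨i, hi.symm, fun j hj => hu j hj.symm⟩
  loopless := by
    constructor
    rintro x ⟨i, hi, -⟩
    exact hi rfl

/-- `c` is a perfect `m`-colouring of a finite simple graph `G` with colour
adjacency matrix `A`: `c` is surjective and every vertex of colour `i` has
exactly `A i j` neighbours of colour `j`. -/
def IsPerfectColoring {V : Type*} [Fintype V] {m : ℕ} (G : SimpleGraph V)
    (c : V → Fin m) (A : Matrix (Fin m) (Fin m) ℕ) : Prop :=
  Function.Surjective c ∧
    ∀ v : V, ∀ j : Fin m, {w : V | G.Adj v w ∧ c w = j}.ncard = A (c v) j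

open Matrix Polynomial

lemma charpoly_restrict_dvd {K M : Type*} [Field K] [AddCommGroup M] [Module K M]
    [FiniteDimensional K M] (f : Module.End K M) (p : Submodule K M)
    (hf : ∀ x ∈ p, f x ∈ p) :
    (f.restrict hf).charpoly ∣ f.charpoly := by
  obtain ⟨q, hq⟩ := Submodule.exists_isCompl p
  set e := Submodule.prodEquivOfIsCompl p q hq with he
  let φ : Module.End K (p × q) := e.symm.conj f
  have hφ : φ.charpoly = f.charpoly := by
    have := LinearEquiv.charpoly_conj e φ
    rw [show e.conj φ = f from by
      ext x; simp [φ, LinearEquiv.conj_apply]] at this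
    exact this.symm
  let bp := Module.Free.chooseBasis K p
  let bq := Module.Free.chooseBasis K q
  let b := bp.prod bq
  have happ : ∀ i : p, φ (i, 0) = ((f.restrict hf) i, 0) := by
    intro i
    have h2 : e (i, 0) = (i : M) := by
      simp [he, Submodule.coe_prodEquivOfIsCompl']
    have h3 : f (i : M) ∈ p := hf _ i.2
    show e.symm (f (e (i, 0))) = _
    rw [h2]
    have h4 : f (i : M) = ((⟨f (i : M), h3⟩ : p) : M) := rfl
    rw [h4, Submodule.prodEquivOfIsCompl_symm_apply_left]
    rfl
  let T := LinearMap.toMatrix b b φ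
  have key1 : T.toBlocks₁₁ = LinearMap.toMatrix bp bp (f.restrict hf) := by
    ext i j
    simp [Matrix.toBlocks₁₁, T, b, LinearMap.toMatrix_apply, happ, Module.Basis.prod_repr_inl]
  have key2 : T.toBlocks₂₁ = 0 := by
    ext i j
    simp [Matrix.toBlocks₂₁, T, b, LinearMap.toMatrix_apply, happ, Module.Basis.prod_repr_inr]
  have hT : T.charpoly = (f.restrict hf).charpoly * T.toBlocks₂₂.charpoly := by
    conv_lhs => rw [← Matrix.fromBlocks_toBlocks T, key1, key2]
    rw [Matrix.charpoly_fromBlocks_zero₂₁, LinearMap.charpoly_toMatrix]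
  have : f.charpoly = (f.restrict hf).charpoly * T.toBlocks₂₂.charpoly := by
    rw [← hφ, ← LinearMap.charpoly_toMatrix φ b]
    exact hT
  exact ⟨_, this⟩

lemma matrix_charpoly_dvd {K V ι : Type*} [Field K] [Fintype V] [DecidableEq V]
    [Fintype ι] [DecidableEq ι]
    (Mm : Matrix V V K) (N : Matrix ι ι K) (B : Matrix V ι K)
    (hinj : Function.Injective (Matrix.toLin' B))
    (hcomm : Mm * B = B * N) :
    N.charpoly ∣ Mm.charpoly := by
  let f := Matrix.toLin' Mm
  let g := Matrix.toLin' B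
  let n := Matrix.toLin' N
  have hfg : ∀ y, f (g y) = g (n y) := by
    intro y
    have : Matrix.toLin' (Mm * B) y = Matrix.toLin' (B * N) y := by rw [hcomm]
    simp only [Matrix.toLin'_mul, LinearMap.comp_apply] at this
    exact this
  let p := LinearMap.range g
  have hp : ∀ x ∈ p, f x ∈ p := by
    rintro x ⟨y, rfl⟩
    exact ⟨n y, (hfg y).symm⟩
  let e : (ι → K) ≃ₗ[K] p := LinearEquiv.ofInjective g hinj
  have hconj : e.conj n = f.restrict hp := by
    apply LinearMap.ext
    intro x
    obtain ⟨y, rfl⟩ := e.surjective x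
    rw [LinearEquiv.conj_apply]
    apply Subtype.ext
    simp only [LinearMap.comp_apply, LinearEquiv.coe_coe, LinearEquiv.symm_apply_apply, LinearMap.restrict_coe_apply,
      LinearEquiv.ofInjective_apply]
    exact (hfg y).symm
  have h1 : n.charpoly = (f.restrict hp).charpoly := by
    rw [← hconj, LinearEquiv.charpoly_conj]
  have h2 : n.charpoly = N.charpoly := by
    rw [← LinearMap.charpoly_toMatrix n (Pi.basisFun K ι), LinearMap.toMatrix_eq_toMatrix',
      LinearMap.toMatrix'_toLin']
  have h3 : f.charpoly = Mm.charpoly := by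
    rw [← LinearMap.charpoly_toMatrix f (Pi.basisFun K V), LinearMap.toMatrix_eq_toMatrix',
      LinearMap.toMatrix'_toLin']
  rw [← h2, ← h3, h1]
  exact charpoly_restrict_dvd f p hp

/-- The characteristic polynomial of the colour adjacency matrix of a perfect
colouring divides the characteristic polynomial of the adjacency matrix of the
graph; in particular each eigenvalue of the former is an eigenvalue of the latter. -/
theorem charpoly_dvd_of_perfectColoring {V : Type*} [Fintype V] [DecidableEq V] {m : ℕ}
    (G : SimpleGraph V) [DecidableRel G.Adj]
    (c : V → Fin m) (A : Matrix (Fin m) (Fin m) ℕ)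
    (h : IsPerfectColoring G c A) :
    (A.map (Nat.cast : ℕ → ℚ)).charpoly ∣ (G.adjMatrix ℚ).charpoly ∧
    ∀ μ : ℚ, (A.map (Nat.cast : ℕ → ℚ)).charpoly.IsRoot μ →
      (G.adjMatrix ℚ).charpoly.IsRoot μ := by
  
  classical
  obtain ⟨hsurj, hcount⟩ := h
  set B : Matrix V (Fin m) ℚ := Matrix.of (fun v j => if c v = j then 1 else 0) with hB
  have hmul : ∀ (x : Fin m → ℚ) (v : V), B.mulVec x v = x (c v) := by
    intro x v
    simp [hB, Matrix.mulVec, dotProduct, ite_mul, one_mul, zero_mul, Finset.sum_ite_eq]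
  have hinj : Function.Injective (Matrix.toLin' B) := by
    intro x y hxy
    funext j
    obtain ⟨v, rfl⟩ := hsurj j
    have := congrFun hxy v
    rwa [Matrix.toLin'_apply, Matrix.toLin'_apply, hmul, hmul] at this
  have hcomm : G.adjMatrix ℚ * B = B * (A.map (Nat.cast : ℕ → ℚ)) := by
    ext v j
    have hRHS : (B * A.map (Nat.cast : ℕ → ℚ)) v j = (A (c v) j : ℚ) := by
      simp [hB, Matrix.mul_apply, ite_mul, one_mul, zero_mul, Finset.sum_ite_eq,
        Matrix.map_apply]
    have hent : ∀ w, (G.adjMatrix ℚ) v w * B w j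
        = if G.Adj v w ∧ c w = j then 1 else 0 := by
      intro w
      by_cases h1 : G.Adj v w <;> by_cases h2 : c w = j <;> simp [hB, h1, h2]
    have hLHS : (G.adjMatrix ℚ * B) v j
        = ((Finset.univ.filter fun w => G.Adj v w ∧ c w = j).card : ℚ) := by
      rw [Matrix.mul_apply]
      simp only [hent]
      rw [Finset.sum_boole]
    have hn : {w : V | G.Adj v w ∧ c w = j}.ncard
        = (Finset.univ.filter fun w => G.Adj v w ∧ c w = j).card := by
      rw [Set.ncard_eq_toFinset_card', Set.toFinset_setOf]
    rw [hLHS, hRHS, ← hcount v j, hn]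
  have hdvd := matrix_charpoly_dvd (G.adjMatrix ℚ) (A.map (Nat.cast : ℕ → ℚ)) B hinj hcomm
  refine ⟨hdvd, fun μ hμ => ?_⟩
  obtain ⟨r, hr⟩ := hdvd
  simp only [Polynomial.IsRoot] at hμ ⊢
  rw [hr, Polynomial.eval_mul, hμ, zero_mul]
end

section
/- Let A = (a_{ij}) ∈ ℕ^{m×m} be the colour adjacency matrix of a perfect m-colouring of some finite simple graph G. Then: (1) (weak symmetry) for all 1 ≤ i, j ≤ m, a_{ij} = 0 if and only if a_{ji} = 0; and (2) (consistency) for every t ≥ 2 and every injective tuple (n_1, …, n_t) of indices in {1, …, m}, a_{n_1 n_2} a_{n_2 n_3} ⋯ a_{n_{t−1} n_t} a_{n_t n_1} = a_{n_2 n_1} a_{n_3 n_2} ⋯ a_{n_t n_{t−1}} a_{n_1 n_t}. -/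
open Finset in
lemma perfect_count {V : Type*} [Fintype V] {m : ℕ} {G : SimpleGraph V}
    {c : V → Fin m} {A : Matrix (Fin m) (Fin m) ℕ} (h : IsPerfectColoring G c A)
    (i j : Fin m) :
    (univ.filter fun v => c v = i).card * A i j
      = (univ.filter fun v => c v = j).card * A j i := by
  classical
  have key : ∀ (i j : Fin m),
      (univ.filter fun v => c v = i).card * A i j
        = ∑ v : V, ∑ w : V, if G.Adj v w ∧ c v = i ∧ c w = j then 1 else 0 := by
    intro i j
    have hA : ∀ v : V, c v = i →
        A i j = ∑ w : V, if G.Adj v w ∧ c w = j then 1 else 0 := by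
      intro v hv
      rw [← hv, ← h.2 v j, Set.ncard_eq_toFinset_card']
      rw [Set.toFinset_setOf, Finset.card_filter]
    calc (univ.filter fun v => c v = i).card * A i j
        = ∑ v ∈ univ.filter fun v => c v = i, A i j := by
          rw [Finset.sum_const, smul_eq_mul]
      _ = ∑ v ∈ univ.filter fun v => c v = i,
            ∑ w : V, if G.Adj v w ∧ c w = j then 1 else 0 := by
          refine Finset.sum_congr rfl fun v hv => ?_
          exact hA v (by simpa using hv)
      _ = ∑ v : V, ∑ w : V, if G.Adj v w ∧ c v = i ∧ c w = j then 1 else 0 := by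
          rw [Finset.sum_filter]
          refine Finset.sum_congr rfl fun v _ => ?_
          by_cases hv : c v = i
          · simp only [hv, if_true]
            refine Finset.sum_congr rfl fun w _ => ?_
            simp [hv]
          · simp [hv]
  rw [key i j, key j i, Finset.sum_comm]
  refine Finset.sum_congr rfl fun v _ => Finset.sum_congr rfl fun w _ => ?_
  rw [G.adj_comm]
  ac_rfl

/-- Necessary conditions on the colour adjacency matrix of a perfect colouring:
weak symmetry and consistency (cyclic products over injective tuples coincide). -/
theorem weakSymm_and_consistency_of_perfectColoring {V : Type*} [Fintype V] {m : ℕ}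
    (G : SimpleGraph V) (c : V → Fin m) (A : Matrix (Fin m) (Fin m) ℕ)
    (h : IsPerfectColoring G c A) :
    (∀ i j : Fin m, A i j = 0 ↔ A j i = 0) ∧
    (∀ t : ℕ, 2 ≤ t → ∀ n : Fin t → Fin m, Function.Injective n →
      (∏ k : Fin t, A (n k) (n (finRotate t k))) =
        ∏ k : Fin t, A (n (finRotate t k)) (n k)) := by
  classical
  set N : Fin m → ℕ := fun i => (Finset.univ.filter fun v => c v = i).card with hN
  have hNpos : ∀ i, 0 < N i := by
    intro i
    obtain ⟨v, hv⟩ := h.1 i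
    exact Finset.card_pos.mpr ⟨v, by simp [hv]⟩
  have key : ∀ i j, N i * A i j = N j * A j i := fun i j => perfect_count h i j
  constructor
  · intro i j
    constructor
    · intro hij
      have := key i j
      rw [hij, Nat.mul_zero] at this
      exact (Nat.mul_eq_zero.mp this.symm).resolve_left (hNpos j).ne'
    · intro hji
      have := key j i
      rw [hji, Nat.mul_zero] at this
      exact (Nat.mul_eq_zero.mp this.symm).resolve_left (hNpos i).ne'
  · intro t _ n _
    have hprod : (∏ k : Fin t, N (n k)) * (∏ k : Fin t, A (n k) (n (finRotate t k)))
        = (∏ k : Fin t, N (n k)) * ∏ k : Fin t, A (n (finRotate t k)) (n k) := by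
      calc (∏ k : Fin t, N (n k)) * ∏ k : Fin t, A (n k) (n (finRotate t k))
          = ∏ k : Fin t, N (n k) * A (n k) (n (finRotate t k)) := by
            rw [Finset.prod_mul_distrib]
        _ = ∏ k : Fin t, N (n (finRotate t k)) * A (n (finRotate t k)) (n k) := by
            refine Finset.prod_congr rfl fun k _ => key _ _
        _ = (∏ k : Fin t, N (n (finRotate t k))) * ∏ k : Fin t, A (n (finRotate t k)) (n k) := by
            rw [Finset.prod_mul_distrib]
        _ = (∏ k : Fin t, N (n k)) * ∏ k : Fin t, A (n (finRotate t k)) (n k) := by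
            rw [Equiv.prod_comp (finRotate t) (fun k => N (n k))]
    exact Nat.eq_of_mul_eq_mul_left
      (Finset.prod_pos fun k _ => hNpos (n k)) hprod
end

section
/- Let A = (a_{ij}) ∈ ℕ^{m×m} satisfy: (1) (weak symmetry) for all 1 ≤ i, j ≤ m, a_{ij} = 0 if and only if a_{ji} = 0; and (2) (consistency) for every t ≥ 2 and every injective tuple (n_1, …, n_t) of indices in {1, …, m}, a_{n_1 n_2} a_{n_2 n_3} ⋯ a_{n_{t−1} n_t} a_{n_t n_1} = a_{n_2 n_1} a_{n_3 n_2} ⋯ a_{n_t n_{t−1}} a_{n_1 n_t}. Then there exists a finite simple graph G together with a perfect m-colouring of G whose colour adjacency matrix is A. -/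
namespace PerfectAux
open SimpleGraph Finset


variable {m : ℕ}

def wNum (A : Matrix (Fin m) (Fin m) ℕ) {H : SimpleGraph (Fin m)} :
    {i j : Fin m} → H.Walk i j → ℕ
  | _, _, .nil => 1
  | i, _, .cons (v := v) _ p => A i v * wNum A p

def wDen (A : Matrix (Fin m) (Fin m) ℕ) {H : SimpleGraph (Fin m)} :
    {i j : Fin m} → H.Walk i j → ℕ
  | _, _, .nil => 1
  | i, _, .cons (v := v) _ p => A v i * wDen A p

variable {A : Matrix (Fin m) (Fin m) ℕ} {H : SimpleGraph (Fin m)}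

@[simp] lemma wNum_nil {i : Fin m} : wNum A (.nil : H.Walk i i) = 1 := rfl
@[simp] lemma wDen_nil {i : Fin m} : wDen A (.nil : H.Walk i i) = 1 := rfl
@[simp] lemma wNum_cons {i v j : Fin m} (h : H.Adj i v) (p : H.Walk v j) :
    wNum A (.cons h p) = A i v * wNum A p := rfl
@[simp] lemma wDen_cons {i v j : Fin m} (h : H.Adj i v) (p : H.Walk v j) :
    wDen A (.cons h p) = A v i * wDen A p := rfl

@[simp] lemma wNum_append {i j k : Fin m} (p : H.Walk i j) (q : H.Walk j k) :
    wNum A (p.append q) = wNum A p * wNum A q := by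
  induction p with
  | nil => simp
  | cons h p ih => simp [Walk.cons_append, ih, mul_assoc]

@[simp] lemma wDen_append {i j k : Fin m} (p : H.Walk i j) (q : H.Walk j k) :
    wDen A (p.append q) = wDen A p * wDen A q := by
  induction p with
  | nil => simp
  | cons h p ih => simp [Walk.cons_append, ih, mul_assoc]

@[simp] lemma wNum_copy {i j i' j' : Fin m} (p : H.Walk i j) (hi : i = i') (hj : j = j') :
    wNum A (p.copy hi hj) = wNum A p := by subst hi; subst hj; rfl

@[simp] lemma wDen_copy {i j i' j' : Fin m} (p : H.Walk i j) (hi : i = i') (hj : j = j') :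
    wDen A (p.copy hi hj) = wDen A p := by subst hi; subst hj; rfl

lemma wNum_reverse {i j : Fin m} (p : H.Walk i j) : wNum A p.reverse = wDen A p := by
  induction p with
  | nil => simp
  | cons h p ih => simp [Walk.reverse_cons, ih, mul_comm]

lemma wNum_pos (hA : ∀ u v, H.Adj u v → A u v ≠ 0) {i j : Fin m} (p : H.Walk i j) :
    0 < wNum A p := by
  induction p with
  | nil => simp
  | cons h p ih => exact Nat.mul_pos (Nat.pos_of_ne_zero (hA _ _ h)) ih

lemma wDen_pos (hA : ∀ u v, H.Adj u v → A u v ≠ 0) {i j : Fin m} (p : H.Walk i j) :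
    0 < wDen A p := by
  induction p with
  | nil => simp
  | cons h p ih => exact Nat.mul_pos (Nat.pos_of_ne_zero (hA _ _ h.symm)) ih

lemma wNum_eq_prod {i j : Fin m} (p : H.Walk i j) :
    wNum A p = ∏ k ∈ Finset.range p.length, A (p.getVert k) (p.getVert (k + 1)) := by
  induction p with
  | nil => simp
  | cons h p ih =>
    rw [Walk.length_cons, Finset.prod_range_succ']
    simp [ih, Walk.getVert_cons_succ, mul_comm, Walk.getVert_zero]

lemma wDen_eq_prod {i j : Fin m} (p : H.Walk i j) :
    wDen A p = ∏ k ∈ Finset.range p.length, A (p.getVert (k + 1)) (p.getVert k) := by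
  induction p with
  | nil => simp
  | cons h p ih =>
    rw [Walk.length_cons, Finset.prod_range_succ']
    simp [ih, Walk.getVert_cons_succ, mul_comm, Walk.getVert_zero]

lemma support_eq_map {i j : Fin m} (p : H.Walk i j) :
    p.support = (List.range (p.length + 1)).map p.getVert := by
  induction p with
  | nil => simp [List.range_succ]
  | cons h p ih =>
    rw [Walk.support_cons, ih, Walk.length_cons, List.range_succ_eq_map]
    simp [List.map_map, Function.comp_def, Walk.getVert_cons_succ, Walk.getVert_zero,
      List.range_succ_eq_map]


lemma cycle_case
    (h2 : ∀ t : ℕ, 2 ≤ t → ∀ n : Fin t → Fin m, Function.Injective n →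
      (∏ k : Fin t, A (n k) (n (finRotate t k))) =
        ∏ k : Fin t, A (n (finRotate t k)) (n k))
    (i : Fin m) (p : H.Walk i i) (hne : p.length ≠ 0) (hnd : p.support.tail.Nodup) :
    (∏ k ∈ Finset.range p.length, A (p.getVert k) (p.getVert (k + 1))) =
      ∏ k ∈ Finset.range p.length, A (p.getVert (k + 1)) (p.getVert k) := by
  have ht2 : 2 ≤ p.length := by
    rcases Nat.lt_or_ge p.length 2 with h | h
    · interval_cases h' : p.length
      · omega
      · have h1 : p.getVert 1 = i := by rw [← h']; exact p.getVert_length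
        have := p.adj_getVert_succ (by omega : 0 < p.length)
        rw [p.getVert_zero, h1] at this
        exact absurd this (H.irrefl)
    · exact h
  obtain ⟨t, ht⟩ : ∃ t, p.length = t + 1 := ⟨p.length - 1, by omega⟩
  -- injectivity on {0, ..., t}
  have htail : p.support.tail = (List.range (t + 1)).map (fun k => p.getVert (k + 1)) := by
    rw [support_eq_map p, ← ht, List.range_succ_eq_map]
    simp [List.map_map, Function.comp_def]
  have hinj' : ∀ a ∈ List.range (t + 1), ∀ b ∈ List.range (t + 1),
      p.getVert (a + 1) = p.getVert (b + 1) → a = b := by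
    have := htail ▸ hnd
    exact List.inj_on_of_nodup_map this
  set n : Fin (t + 1) → Fin m := fun k => p.getVert k with hn
  have hgl : p.getVert (t + 1) = i := by rw [← ht]; exact p.getVert_length
  have hinj : Function.Injective n := by
    intro a b hab
    simp only [hn] at hab
    rcases Nat.eq_zero_or_pos a.val with ha | ha
    · rcases Nat.eq_zero_or_pos b.val with hb | hb
      · exact Fin.ext (by omega)
      · have h0 : p.getVert (t + 1) = p.getVert ↑b := by
          rw [hgl, ← hab, ha, p.getVert_zero]
        have := hinj' (b.val - 1) (by simp) t (by simp) (by
          rw [Nat.sub_add_cancel hb]; exact h0.symm)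
        have hbv := b.isLt; omega
    · rcases Nat.eq_zero_or_pos b.val with hb | hb
      · have h0 : p.getVert (t + 1) = p.getVert ↑a := by
          rw [hgl, hab, hb, p.getVert_zero]
        have := hinj' (a.val - 1) (by simp) t (by simp) (by
          rw [Nat.sub_add_cancel ha]; exact h0.symm)
        have hav := a.isLt; omega
      · have := hinj' (a.val - 1) (by simp) (b.val - 1) (by simp) (by
          rw [Nat.sub_add_cancel ha, Nat.sub_add_cancel hb]; exact hab)
        exact Fin.ext (by omega)
  have key := h2 (t + 1) (by omega) n hinj
  have hrot : ∀ k : Fin (t + 1), n (finRotate (t + 1) k) = p.getVert (k.val + 1) := by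
    intro k
    rw [finRotate_succ_apply]
    by_cases hk : k = Fin.last t
    · subst hk
      rw [Fin.last_add_one]
      simp only [hn, Fin.val_zero, Fin.val_last, p.getVert_zero, hgl]
    · have : (k + 1).val = k.val + 1 := by
        rw [Fin.val_add_one]; simp [hk]
      simp only [hn, this]
  rw [ht, ← Fin.prod_univ_eq_prod_range (fun k => A (p.getVert k) (p.getVert (k + 1))) (t + 1),
    ← Fin.prod_univ_eq_prod_range (fun k => A (p.getVert (k + 1)) (p.getVert k)) (t + 1)]
  calc (∏ k : Fin (t + 1), A (p.getVert k) (p.getVert (k.val + 1)))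
      = ∏ k : Fin (t + 1), A (n k) (n (finRotate (t + 1) k)) := by
        refine Finset.prod_congr rfl fun k _ => by rw [hrot k]
    _ = ∏ k : Fin (t + 1), A (n (finRotate (t + 1) k)) (n k) := key
    _ = ∏ k : Fin (t + 1), A (p.getVert (k.val + 1)) (p.getVert k) := by
        refine Finset.prod_congr rfl fun k _ => by rw [hrot k]

theorem closed_balanced
    (h2 : ∀ t : ℕ, 2 ≤ t → ∀ n : Fin t → Fin m, Function.Injective n →
      (∏ k : Fin t, A (n k) (n (finRotate t k))) =
        ∏ k : Fin t, A (n (finRotate t k)) (n k)) :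
    ∀ (L : ℕ) (i : Fin m) (p : H.Walk i i), p.length ≤ L → wNum A p = wDen A p := by
  intro L
  induction L with
  | zero =>
    intro i p hp
    rw [Walk.nil_iff_eq_nil.mp (Walk.length_eq_zero_iff.mp (Nat.le_zero.mp hp))]
    rfl
  | succ L ih =>
    intro i p hp
    by_cases hne : p.length = 0
    · rw [Walk.nil_iff_eq_nil.mp (Walk.length_eq_zero_iff.mp hne)]
      rfl
    by_cases hnd : p.support.tail.Nodup
    · rw [wNum_eq_prod, wDen_eq_prod]
      exact cycle_case h2 i p hne hnd
    · -- find a repeated vertex and split the walk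
      have hdup : ∃ u, 2 ≤ p.support.tail.count u := by
        by_contra hc
        push_neg at hc
        exact hnd (List.nodup_iff_count_le_one.mpr fun a => by have := hc a; omega)
      obtain ⟨u, hu2⟩ := hdup
      have humem : u ∈ p.support :=
        List.mem_of_mem_tail (List.count_pos_iff.mp (by omega))
      have hspec := p.take_spec humem
      set q := p.takeUntil u humem with hqdef
      set r := p.dropUntil u humem with hrdef
      have hcq : q.support.count u = 1 := p.count_support_takeUntil_eq_one humem
      have htail : p.support.tail = q.support.tail ++ r.support.tail := by
        conv_lhs => rw [← hspec]
        exact Walk.tail_support_append q r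
      have hcqt : q.support.tail.count u ≤ 1 := by
        calc q.support.tail.count u ≤ q.support.count u :=
              (List.tail_sublist q.support).count_le u
          _ = 1 := hcq
      have hcr : 1 ≤ r.support.tail.count u := by
        rw [htail, List.count_append] at hu2; omega
      have hur : u ∈ r.support.tail := List.count_pos_iff.mp (by omega)
      have hrnotnil : ¬ r.Nil := by
        intro h
        rw [Walk.nil_iff_support_eq.mp h] at hur
        simp at hur
      obtain ⟨w, h', r', hre⟩ := Walk.not_nil_iff.mp hrnotnil
      have hur' : u ∈ r'.support := by
        rw [hre] at hur
        simpa using hur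
      have hspec2 := r'.take_spec hur'
      set t' := r'.takeUntil u hur' with ht'def
      set d := r'.dropUntil u hur' with hddef
      have hct' : t'.support.count u = 1 := r'.count_support_takeUntil_eq_one hur'
      have hp' : p = q.append ((Walk.cons h' t').append d) := by
        rw [Walk.cons_append, hspec2, ← hre, hspec]
      -- length bookkeeping
      have hlen : p.length = q.length + (1 + (t'.length + d.length)) := by
        rw [hp']
        simp [Walk.length_append, Walk.length_cons]
        omega
      have hqd1 : 1 ≤ q.length + d.length := by
        by_contra hc
        push_neg at hc
        have hq0 : q.length = 0 := by omega
        have hd0 : d.length = 0 := by omega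
        have hqt : q.support.tail = [] := by
          have := q.length_support
          cases hs : q.support.tail with
          | nil => rfl
          | cons a l => rw [Walk.support_eq_cons q, hs] at this; simp at this; omega
        have hdt : d.support.tail = [] := by
          have := d.length_support
          cases hs : d.support.tail with
          | nil => rfl
          | cons a l => rw [Walk.support_eq_cons d, hs] at this; simp at this; omega
        have hr's : r'.support = t'.support ++ d.support.tail := by
          conv_lhs => rw [← hspec2]
          exact Walk.support_append t' d
        have hcount2 : 2 ≤ r'.support.count u := by
          rw [htail, hqt] at hu2
          simp at hu2
          have : r.support.tail = r'.support := by rw [hre]; simp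
          rwa [this] at hu2
        rw [hr's, hdt] at hcount2
        simp at hcount2
        omega
      have hlc : (Walk.cons h' t').length ≤ L := by
        rw [Walk.length_cons]; omega
      have hlqd : (q.append d).length ≤ L := by
        rw [Walk.length_append]; omega
      have e1 := ih u (Walk.cons h' t') hlc
      have e2 := ih i (q.append d) hlqd
      rw [wNum_append, wDen_append] at e2
      rw [hp', wNum_append, wNum_append, wDen_append, wDen_append]
      calc wNum A q * (wNum A (Walk.cons h' t') * wNum A d)
          = wNum A (Walk.cons h' t') * (wNum A q * wNum A d) := by ring
        _ = wDen A (Walk.cons h' t') * (wDen A q * wDen A d) := by rw [e1, e2]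
        _ = wDen A q * (wDen A (Walk.cons h' t') * wDen A d) := by ring

lemma wDen_reverse {i j : Fin m} (p : H.Walk i j) : wDen A p.reverse = wNum A p := by
  rw [← wNum_reverse p.reverse, Walk.reverse_reverse]

theorem path_indep
    (h2 : ∀ t : ℕ, 2 ≤ t → ∀ n : Fin t → Fin m, Function.Injective n →
      (∏ k : Fin t, A (n k) (n (finRotate t k))) =
        ∏ k : Fin t, A (n (finRotate t k)) (n k))
    {a b : Fin m} (p q : H.Walk a b) :
    wNum A p * wDen A q = wNum A q * wDen A p := by
  have := closed_balanced h2 (p.append q.reverse).length a (p.append q.reverse) le_rfl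
  rw [wNum_append, wDen_append, wNum_reverse, wDen_reverse] at this
  linarith

theorem exists_weights (A : Matrix (Fin m) (Fin m) ℕ)
    (h1 : ∀ i j : Fin m, A i j = 0 ↔ A j i = 0)
    (h2 : ∀ t : ℕ, 2 ≤ t → ∀ n : Fin t → Fin m, Function.Injective n →
      (∏ k : Fin t, A (n k) (n (finRotate t k))) =
        ∏ k : Fin t, A (n (finRotate t k)) (n k)) :
    ∃ n : Fin m → ℕ, (∀ i, 0 < n i) ∧ ∀ i j, n i * A i j = n j * A j i := by
  classical
  set H : SimpleGraph (Fin m) :=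
    { Adj := fun i j => i ≠ j ∧ A i j ≠ 0 ∧ A j i ≠ 0
      symm := by constructor; rintro i j ⟨hne, hij, hji⟩; exact ⟨hne.symm, hji, hij⟩
      loopless := by constructor; rintro i ⟨hne, -, -⟩; exact hne rfl } with hHdef
  have hA : ∀ u v, H.Adj u v → A u v ≠ 0 := fun u v h => h.2.1
  have hreach : ∀ i : Fin m, H.Reachable ((H.connectedComponentMk i).out) i := by
    intro i
    apply SimpleGraph.ConnectedComponent.exact
    exact Quot.out_eq _
  obtain ⟨wk, -⟩ : ∃ _ : (i : Fin m) → H.Walk ((H.connectedComponentMk i).out) i, True :=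
    ⟨fun i => (hreach i).some, trivial⟩
  set ν : Fin m → ℕ := fun i => wNum A (wk i) with hν
  set δ : Fin m → ℕ := fun i => wDen A (wk i) with hδ
  have hνpos : ∀ i, 0 < ν i := fun i => wNum_pos hA _
  have hδpos : ∀ i, 0 < δ i := fun i => wDen_pos hA _
  set P : ℕ := ∏ k, δ k with hP
  refine ⟨fun i => ν i * ∏ k ∈ Finset.univ.erase i, δ k, fun i => Nat.mul_pos (hνpos i)
    (Finset.prod_pos fun k _ => hδpos k), ?_⟩
  have hnP : ∀ i, (ν i * ∏ k ∈ Finset.univ.erase i, δ k) * δ i = ν i * P := by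
    intro i
    rw [hP, ← Finset.mul_prod_erase Finset.univ δ (Finset.mem_univ i)]
    ring
  intro i j
  by_cases hij : i = j
  · subst hij; rfl
  by_cases hz : A i j = 0
  · rw [hz, (h1 i j).mp hz, mul_zero, mul_zero]
  have hzj : A j i ≠ 0 := fun h => hz ((h1 i j).mpr h)
  have hadj : H.Adj i j := ⟨hij, hz, hzj⟩
  have hroot : (H.connectedComponentMk i).out = (H.connectedComponentMk j).out := by
    rw [SimpleGraph.ConnectedComponent.sound hadj.reachable]
  have key : ν j * (δ i * A j i) = ν i * A i j * δ j := by
    have := path_indep h2 (wk j)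
      (((wk i).append (Walk.cons hadj Walk.nil)).copy hroot rfl)
    rw [wNum_copy, wDen_copy, wNum_append, wDen_append, wNum_cons, wDen_cons,
      wNum_nil, wDen_nil] at this
    simp only [hν, hδ]
    rw [mul_one, mul_one] at this
    exact this
  have hcancel : ∀ a b c : ℕ, 0 < c → a * c = b * c → a = b :=
    fun a b c hc h => Nat.eq_of_mul_eq_mul_right hc h
  apply hcancel _ _ (δ i * δ j) (Nat.mul_pos (hδpos i) (hδpos j))
  calc (ν i * ∏ k ∈ Finset.univ.erase i, δ k) * A i j * (δ i * δ j)
      = ((ν i * ∏ k ∈ Finset.univ.erase i, δ k) * δ i) * (A i j * δ j) := by ring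
    _ = (ν i * P) * (A i j * δ j) := by rw [hnP i]
    _ = (ν i * A i j * δ j) * P := by ring
    _ = (ν j * (δ i * A j i)) * P := by rw [key]
    _ = ((ν j * P) * A j i) * δ i := by ring
    _ = (((ν j * ∏ k ∈ Finset.univ.erase j, δ k) * δ j) * A j i) * δ i := by rw [hnP j]
    _ = (ν j * ∏ k ∈ Finset.univ.erase j, δ k) * A j i * (δ i * δ j) := by ring



lemma card_filter_mod (g k : ℕ) (hg : 0 < g) (Q : ℕ → Prop) [DecidablePred Q] :
    ((Finset.range (k * g)).filter (fun t => Q (t % g))).card =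
      k * ((Finset.range g).filter Q).card := by
  induction k with
  | zero => simp
  | succ k ih =>
    rw [Nat.succ_mul, Finset.range_add, Finset.filter_union,
      Finset.card_union_of_disjoint, ih]
    · have : ((Finset.range g).map (addLeftEmbedding (k * g))).filter
          (fun t => Q (t % g)) =
          ((Finset.range g).filter (fun t => Q (t % g))).map (addLeftEmbedding (k * g)) := by
        rw [Finset.filter_map]
        congr 1
        apply Finset.filter_congr
        intro t _
        simp [addLeftEmbedding, Nat.add_mul_mod_self_left, Nat.mul_mod_right]
      rw [this, Finset.card_map]
      have : (Finset.range g).filter (fun t => Q (t % g)) = (Finset.range g).filter Q := by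
        apply Finset.filter_congr
        intro t ht
        rw [Nat.mod_eq_of_lt (Finset.mem_range.mp ht)]
      rw [this]
      ring
    · rw [Finset.disjoint_left]
      intro a ha hb
      simp only [Finset.mem_filter, Finset.mem_range] at ha
      simp only [Finset.mem_filter, Finset.mem_map, addLeftEmbedding] at hb
      obtain ⟨⟨t, ht, hteq⟩, -⟩ := hb
      simp only [Function.Embedding.coeFn_mk] at hteq
      omega

lemma card_fin_val_mod (v g : ℕ) (hg : 0 < g) (hdvd : g ∣ v) (Q : ℕ → Prop) [DecidablePred Q] :
    (Finset.univ.filter (fun y : Fin v => Q (y.val % g))).card =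
      (v / g) * ((Finset.range g).filter Q).card := by
  have h1 := card_filter_mod g (v / g) hg Q
  rw [Nat.div_mul_cancel hdvd] at h1
  rw [← h1]
  apply Finset.card_bij (fun (y : Fin v) _ => y.val)
  · intro y hy
    simp only [Finset.mem_filter, Finset.mem_univ, true_and] at hy
    simp [Finset.mem_filter, Finset.mem_range, y.isLt, hy]
  · intro a _ b _ hab
    exact Fin.ext hab
  · intro t ht
    simp only [Finset.mem_filter, Finset.mem_range] at ht
    exact ⟨⟨t, ht.1⟩, by simp [Finset.mem_filter, ht.2], rfl⟩

lemma count_sub_val_mem (v g : ℕ) (hg : 0 < g) (hdvd : g ∣ v) (c : ZMod g) (D : Finset ℕ)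
    (hD : ∀ d ∈ D, d < g) :
    (Finset.univ.filter (fun y : Fin v => ((c - (y.val : ZMod g)).val ∈ D))).card =
      D.card * (v / g) := by
  haveI : NeZero g := ⟨hg.ne'⟩
  classical
  have hfc : (Finset.univ.filter (fun y : Fin v => ((c - (y.val : ZMod g)).val ∈ D))) =
      (Finset.univ.filter
        (fun y : Fin v => ((c - ((y.val % g : ℕ) : ZMod g)).val ∈ D))) := by
    apply Finset.filter_congr
    intro y _
    rw [ZMod.natCast_mod]
  rw [hfc, card_fin_val_mod v g hg hdvd (fun r : ℕ => (c - (r : ZMod g)).val ∈ D)]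
  have hB : ((Finset.range g).filter (fun r : ℕ => (c - (r : ZMod g)).val ∈ D)).card
      = D.card := by
    refine Finset.card_bij (fun (r : ℕ) (_ : r ∈ (Finset.range g).filter (fun r : ℕ => (c - (r : ZMod g)).val ∈ D)) => (c - (r : ZMod g)).val) ?_ ?_ ?_
    · intro r hr
      exact (Finset.mem_filter.mp hr).2
    · intro a ha b hb hab
      simp only [Finset.mem_filter, Finset.mem_range] at ha hb
      have := ZMod.val_injective g hab
      have h2 : (a : ZMod g) = (b : ZMod g) := by
        have := sub_right_injective this
        exact this
      have := congrArg ZMod.val h2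
      rwa [ZMod.val_cast_of_lt ha.1, ZMod.val_cast_of_lt hb.1] at this
    · intro d hd
      refine ⟨(c - (d : ZMod g)).val, ?_, ?_⟩
      · simp only [Finset.mem_filter, Finset.mem_range]
        constructor
        · exact ZMod.val_lt _
        · rw [ZMod.natCast_val, ZMod.cast_id, sub_sub_cancel,
            ZMod.val_cast_of_lt (hD d hd)]
          exact hd
      · show (c - (((c - (d : ZMod g)).val : ℕ) : ZMod g)).val = d
        rw [ZMod.natCast_val, ZMod.cast_id, sub_sub_cancel,
          ZMod.val_cast_of_lt (hD d hd)]
  rw [hB]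
  ring



variable {m : ℕ}

def gg (N : Fin m → ℕ) (i j : Fin m) : ℕ := Nat.gcd (N i) (N j)

def sij (A : Matrix (Fin m) (Fin m) ℕ) (N : Fin m → ℕ) (i j : Fin m) : ℕ :=
  A i j / (N j / gg N i j)

def DD (A : Matrix (Fin m) (Fin m) ℕ) (N : Fin m → ℕ) (i j : Fin m) : Finset ℕ :=
  if i = j then
    ((Finset.range (A i i / 2)).image (fun t => t + 1)) ∪
      ((Finset.range (A i i / 2)).image (fun t => N i - 1 - t)) ∪
      (if A i i % 2 = 1 then {N i / 2} else ∅)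
  else if i < j then Finset.range (sij A N i j)
  else (Finset.range (sij A N i j)).image (fun t => (gg N i j - t) % gg N i j)

section lemmas

variable {A : Matrix (Fin m) (Fin m) ℕ} {N : Fin m → ℕ}

lemma gg_pos (hpos : ∀ i, 0 < N i) (i j : Fin m) : 0 < gg N i j :=
  Nat.gcd_pos_of_pos_left _ (hpos i)

lemma gg_comm (i j : Fin m) : gg N i j = gg N j i := Nat.gcd_comm _ _

lemma gg_dvd_right (i j : Fin m) : gg N i j ∣ N j := Nat.gcd_dvd_right _ _

lemma gg_self (i : Fin m) : gg N i i = N i := Nat.gcd_self _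

lemma vp_pos (hpos : ∀ i, 0 < N i) (i j : Fin m) : 0 < N j / gg N i j :=
  Nat.div_pos (Nat.le_of_dvd (hpos j) (gg_dvd_right i j)) (gg_pos hpos i j)

lemma sij_mul (hpos : ∀ i, 0 < N i) (hbal : ∀ i j, N i * A i j = N j * A j i)
    (i j : Fin m) : sij A N i j * (N j / gg N i j) = A i j := by
  set g := gg N i j with hg
  have hgpos : 0 < g := gg_pos hpos i j
  have hu : g ∣ N i := Nat.gcd_dvd_left _ _
  have hv : g ∣ N j := Nat.gcd_dvd_right _ _
  set u' := N i / g with hu'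
  set v' := N j / g with hv'
  have hNi : N i = g * u' := (Nat.mul_div_cancel' hu).symm
  have hNj : N j = g * v' := (Nat.mul_div_cancel' hv).symm
  have hco : Nat.Coprime u' v' := Nat.coprime_div_gcd_div_gcd hgpos
  have hbal' : u' * A i j = v' * A j i := by
    have := hbal i j
    rw [hNi, hNj, mul_assoc, mul_assoc] at this
    exact Nat.eq_of_mul_eq_mul_left hgpos this
  have hdvd : v' ∣ A i j := by
    have h1 : v' ∣ u' * A i j := hbal' ▸ Dvd.intro _ rfl
    exact (Nat.Coprime.dvd_of_dvd_mul_left (Nat.Coprime.symm hco) h1)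
  rw [sij, ← hg, ← hv']
  exact Nat.div_mul_cancel hdvd

lemma sij_comm (hpos : ∀ i, 0 < N i) (hbal : ∀ i j, N i * A i j = N j * A j i)
    (i j : Fin m) : sij A N i j = sij A N j i := by
  have h1 := sij_mul hpos hbal i j
  have h2 := sij_mul hpos hbal j i
  have hupos : 0 < N i / gg N j i := vp_pos hpos j i
  have key : sij A N i j * ((N j / gg N i j) * N i)
      = sij A N j i * ((N i / gg N j i) * N j) := by
    rw [← mul_assoc, ← mul_assoc, h1, h2, mul_comm (A i j) (N i), mul_comm (A j i) (N j)]
    exact (hbal i j).symm ▸ (hbal j i) ▸ rfl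
  have hNgN : (N j / gg N i j) * N i = (N i / gg N j i) * N j := by
    rw [gg_comm (N := N) i j]
    obtain ⟨b, hb⟩ := gg_dvd_right (N := N) i j
    obtain ⟨a2, ha2⟩ := gg_dvd_right (N := N) j i
    have hgpos' : 0 < gg N j i := gg_pos hpos j i
    rw [gg_comm (N := N) i j] at hb
    rw [hb, ha2, Nat.mul_div_cancel_left _ hgpos', Nat.mul_div_cancel_left _ hgpos']
    ring
  rw [hNgN] at key
  exact Nat.eq_of_mul_eq_mul_right (Nat.mul_pos hupos (hpos j)) key

lemma sij_lt_g (hpos : ∀ i, 0 < N i) (hbal : ∀ i j, N i * A i j = N j * A j i)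
    (hbig : ∀ i j, 2 * A i j + 2 ≤ N j) (i j : Fin m) : sij A N i j < gg N i j := by
  by_contra hc
  push_neg at hc
  have h1 := sij_mul hpos hbal i j
  have hNj : gg N i j * (N j / gg N i j) = N j := Nat.mul_div_cancel' (gg_dvd_right i j)
  have h2 : N j ≤ A i j := by
    calc N j = gg N i j * (N j / gg N i j) := hNj.symm
      _ ≤ sij A N i j * (N j / gg N i j) := Nat.mul_le_mul_right _ hc
      _ = A i j := h1
  have := hbig i j
  omega

lemma DD_lt (hpos : ∀ i, 0 < N i) (hbal : ∀ i j, N i * A i j = N j * A j i)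
    (hbig : ∀ i j, 2 * A i j + 2 ≤ N j) (i j : Fin m) :
    ∀ d ∈ DD A N i j, d < gg N i j := by
  intro d hd
  rw [DD] at hd
  by_cases hij : i = j
  · subst hij
    rw [if_pos rfl] at hd
    rw [gg_self]
    have hb := hbig i i
    have hN := hpos i
    simp only [Finset.mem_union, Finset.mem_image, Finset.mem_range] at hd
    rcases hd with (⟨t, ht, rfl⟩ | ⟨t, ht, rfl⟩) | hd
    · omega
    · omega
    · by_cases ho : A i i % 2 = 1
      · rw [if_pos ho, Finset.mem_singleton] at hd
        omega
      · rw [if_neg ho] at hd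
        simp at hd
  · rw [if_neg hij] at hd
    by_cases hlt : i < j
    · rw [if_pos hlt, Finset.mem_range] at hd
      exact lt_trans hd (sij_lt_g hpos hbal hbig i j)
    · rw [if_neg hlt] at hd
      simp only [Finset.mem_image, Finset.mem_range] at hd
      obtain ⟨t, ht, rfl⟩ := hd
      exact Nat.mod_lt _ (gg_pos hpos i j)

lemma zero_notin_DD (hpos : ∀ i, 0 < N i) (heven : ∀ i, N i % 2 = 0)
    (hbig : ∀ i j, 2 * A i j + 2 ≤ N j) (i : Fin m) : 0 ∉ DD A N i i := by
  rw [DD, if_pos rfl]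
  have hb := hbig i i
  have he := heven i
  have hN := hpos i
  simp only [Finset.mem_union, Finset.mem_image, Finset.mem_range]
  push_neg
  refine ⟨⟨fun t ht => by omega, fun t ht => by omega⟩, ?_⟩
  by_cases ho : A i i % 2 = 1
  · rw [if_pos ho, Finset.mem_singleton]
    omega
  · rw [if_neg ho]
    simp

lemma mod_sub_eq (g : ℕ) : ∀ t : ℕ, t < g → (g - t) % g = if t = 0 then 0 else g - t := by
  intro t ht
  rcases Nat.eq_zero_or_pos t with rfl | h
  · simp [Nat.mod_self]
  · rw [Nat.mod_eq_of_lt (by omega), if_neg (by omega)]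

lemma card_DD (hpos : ∀ i, 0 < N i) (hbal : ∀ i j, N i * A i j = N j * A j i)
    (heven : ∀ i, N i % 2 = 0) (hbig : ∀ i j, 2 * A i j + 2 ≤ N j) (i j : Fin m) :
    (DD A N i j).card * (N j / gg N i j) = A i j := by
  classical
  by_cases hij : i = j
  · subst hij
    have h1 : N i / gg N i i = 1 := by rw [gg_self, Nat.div_self (hpos i)]
    rw [h1, mul_one, DD, if_pos rfl]
    have hb := hbig i i
    have he := heven i
    have hN := hpos i
    set k := A i i / 2 with hk
    have hcard1 : ((Finset.range k).image (fun t => t + 1)).card = k := by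
      rw [Finset.card_image_of_injective _ (add_left_injective 1), Finset.card_range]
    have hcard2 : ((Finset.range k).image (fun t => N i - 1 - t)).card = k := by
      rw [Finset.card_image_of_injOn, Finset.card_range]
      intro a ha b hb' hab
      simp only [Finset.mem_coe, Finset.mem_range] at ha hb'
      simp only at hab
      omega
    have hd12 : Disjoint ((Finset.range k).image (fun t => t + 1))
        ((Finset.range k).image (fun t => N i - 1 - t)) := by
      rw [Finset.disjoint_left]
      intro a ha hb'
      simp only [Finset.mem_image, Finset.mem_range] at ha hb'
      obtain ⟨t1, ht1, heq1⟩ := ha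
      obtain ⟨t2, ht2, heq2⟩ := hb'
      omega
    have hd3 : Disjoint (((Finset.range k).image (fun t => t + 1)) ∪
        ((Finset.range k).image (fun t => N i - 1 - t)))
        (if A i i % 2 = 1 then ({N i / 2} : Finset ℕ) else ∅) := by
      by_cases ho : A i i % 2 = 1
      · rw [if_pos ho, Finset.disjoint_left]
        intro a ha hb'
        simp only [Finset.mem_union, Finset.mem_image, Finset.mem_range] at ha
        rw [Finset.mem_singleton] at hb'
        rcases ha with ⟨t, ht, heq⟩ | ⟨t, ht, heq⟩ <;> omega
      · rw [if_neg ho]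
        exact Finset.disjoint_empty_right _
    rw [Finset.card_union_of_disjoint hd3, Finset.card_union_of_disjoint hd12,
      hcard1, hcard2]
    by_cases ho : A i i % 2 = 1
    · rw [if_pos ho, Finset.card_singleton]
      omega
    · rw [if_neg ho, Finset.card_empty]
      omega
  · rw [DD, if_neg hij]
    by_cases hlt : i < j
    · rw [if_pos hlt, Finset.card_range]
      exact sij_mul hpos hbal i j
    · rw [if_neg hlt]
      have hslt := sij_lt_g hpos hbal hbig i j
      have hgpos := gg_pos hpos i j
      rw [Finset.card_image_of_injOn, Finset.card_range]
      · exact sij_mul hpos hbal i j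
      · intro a ha b hb hab
        simp only [Finset.mem_coe, Finset.mem_range] at ha hb
        simp only at hab
        rw [mod_sub_eq _ a (by omega), mod_sub_eq _ b (by omega)] at hab
        split_ifs at hab <;> omega

lemma neg_DD (hpos : ∀ i, 0 < N i) (hbal : ∀ i j, N i * A i j = N j * A j i)
    (heven : ∀ i, N i % 2 = 0) (hbig : ∀ i j, 2 * A i j + 2 ≤ N j) (i j : Fin m)
    (a : ZMod (gg N i j)) (ha : a.val ∈ DD A N i j) : (-a).val ∈ DD A N j i := by
  haveI : NeZero (gg N i j) := ⟨(gg_pos hpos i j).ne'⟩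
  by_cases hij : i = j
  · subst hij
    have hgs : gg N i i = N i := gg_self i
    have hd0 : a.val ≠ 0 := fun h => zero_notin_DD hpos heven hbig i (h ▸ ha)
    have ha0 : a ≠ 0 := fun h => hd0 (by rw [h, ZMod.val_zero])
    have hneg : (-a).val = N i - a.val := by
      rw [ZMod.neg_val, if_neg ha0]
      omega
    rw [DD, if_pos rfl] at ha ⊢
    have hb := hbig i i
    have he := heven i
    have hN := hpos i
    have hvlt : a.val < N i := by have := ZMod.val_lt a; omega
    simp only [Finset.mem_union, Finset.mem_image, Finset.mem_range] at ha ⊢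
    rcases ha with (⟨t, ht, hteq⟩ | ⟨t, ht, hteq⟩) | ha
    · left; right
      exact ⟨t, ht, by omega⟩
    · left; left
      exact ⟨t, ht, by omega⟩
    · right
      by_cases ho : A i i % 2 = 1
      · rw [if_pos ho, Finset.mem_singleton] at ha ⊢
        omega
      · rw [if_neg ho] at ha
        simp at ha
  · have hslt := sij_lt_g hpos hbal hbig i j
    have hslt' := sij_lt_g hpos hbal hbig j i
    have hgpos := gg_pos hpos i j
    have hji : ¬ (j = i) := fun h => hij h.symm
    rcases lt_or_gt_of_ne hij with hlt | hgt
    · -- i < j : DD i j = range s, DD j i is the image set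
      rw [DD, if_neg hij, if_pos hlt, Finset.mem_range] at ha
      rw [DD, if_neg hji, if_neg (by omega : ¬ j < i)]
      rw [← gg_comm (N := N) i j, ← sij_comm hpos hbal i j]
      simp only [Finset.mem_image, Finset.mem_range]
      exact ⟨a.val, ha, (ZMod.neg_val' a).symm⟩
    · -- j < i : DD i j is the image set, DD j i = range s
      rw [DD, if_neg hij, if_neg (by omega : ¬ i < j)] at ha
      rw [DD, if_neg hji, if_pos hgt, ← sij_comm hpos hbal i j, Finset.mem_range]
      simp only [Finset.mem_image, Finset.mem_range] at ha
      obtain ⟨t, ht, hteq⟩ := ha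
      have htg : t < gg N i j := by omega
      have haeq : a = -(t : ZMod (gg N i j)) := by
        have h1 : ((a.val : ℕ) : ZMod (gg N i j)) = a := by
          rw [ZMod.natCast_val, ZMod.cast_id]
        rw [← h1, ← hteq, ZMod.natCast_mod, Nat.cast_sub (le_of_lt htg),
          ZMod.natCast_self, zero_sub]
      rw [haeq, neg_neg, ZMod.val_cast_of_lt htg]
      exact ht

end lemmas

section construction

variable {m : ℕ}

def cnd (A : Matrix (Fin m) (Fin m) ℕ) (N : Fin m → ℕ) (i j : Fin m) (x y : ℕ) : Prop :=
  (((x : ZMod (gg N i j)) - (y : ZMod (gg N i j))).val ∈ DD A N i j)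

def bigG (A : Matrix (Fin m) (Fin m) ℕ) (N : Fin m → ℕ) :
    SimpleGraph ((i : Fin m) × Fin (N i)) where
  Adj v w := v ≠ w ∧ cnd A N v.1 w.1 v.2.val w.2.val ∧ cnd A N w.1 v.1 w.2.val v.2.val
  symm := ⟨fun v w h => ⟨Ne.symm h.1, h.2.2, h.2.1⟩⟩
  loopless := ⟨fun v h => h.1 rfl⟩

variable {A : Matrix (Fin m) (Fin m) ℕ} {N : Fin m → ℕ}

lemma cnd_symm (hpos : ∀ i, 0 < N i) (hbal : ∀ i j, N i * A i j = N j * A j i)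
    (heven : ∀ i, N i % 2 = 0) (hbig : ∀ i j, 2 * A i j + 2 ≤ N j)
    {i j : Fin m} {x y : ℕ} (h : cnd A N i j x y) : cnd A N j i y x := by
  unfold cnd at h ⊢
  have h2 := neg_DD hpos hbal heven hbig i j _ h
  rw [neg_sub] at h2
  rw [show gg N j i = gg N i j from (gg_comm i j).symm]
  exact h2

lemma cnd_irrefl (hpos : ∀ i, 0 < N i) (heven : ∀ i, N i % 2 = 0)
    (hbig : ∀ i j, 2 * A i j + 2 ≤ N j) (i : Fin m) (x : ℕ) : ¬ cnd A N i i x x := by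
  haveI : NeZero (gg N i i) := ⟨(gg_pos hpos i i).ne'⟩
  unfold cnd
  rw [sub_self, ZMod.val_zero]
  exact zero_notin_DD hpos heven hbig i

lemma adj_iff (hpos : ∀ i, 0 < N i) (hbal : ∀ i j, N i * A i j = N j * A j i)
    (heven : ∀ i, N i % 2 = 0) (hbig : ∀ i j, 2 * A i j + 2 ≤ N j)
    (v w : (i : Fin m) × Fin (N i)) :
    (bigG A N).Adj v w ↔ cnd A N v.1 w.1 v.2.val w.2.val := by
  constructor
  · exact fun h => h.2.1
  · intro h
    refine ⟨?_, h, cnd_symm hpos hbal heven hbig h⟩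
    rintro rfl
    exact cnd_irrefl hpos heven hbig v.1 v.2.val h

lemma degree_count (hpos : ∀ i, 0 < N i) (hbal : ∀ i j, N i * A i j = N j * A j i)
    (heven : ∀ i, N i % 2 = 0) (hbig : ∀ i j, 2 * A i j + 2 ≤ N j)
    (v : (i : Fin m) × Fin (N i)) (j : Fin m) :
    {w : (i : Fin m) × Fin (N i) | (bigG A N).Adj v w ∧ w.1 = j}.ncard = A v.1 j := by
  classical
  obtain ⟨i, x⟩ := v
  haveI : NeZero (gg N i j) := ⟨(gg_pos hpos i j).ne'⟩
  have hset : {w : (i : Fin m) × Fin (N i) | (bigG A N).Adj ⟨i, x⟩ w ∧ w.1 = j} =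
      ↑(((Finset.univ.filter (fun y : Fin (N j) => cnd A N i j x.val y.val))).image
        (fun y => (⟨j, y⟩ : (i : Fin m) × Fin (N i)))) := by
    ext w
    obtain ⟨j', y⟩ := w
    simp only [Set.mem_setOf_eq, Finset.coe_image, Set.mem_image, Finset.mem_coe,
      Finset.mem_filter, Finset.mem_univ, true_and]
    constructor
    · rintro ⟨hadj, rfl⟩
      exact ⟨y, (adj_iff hpos hbal heven hbig _ _).mp hadj, rfl⟩
    · rintro ⟨y', hcnd, heq⟩
      obtain ⟨rfl, hy⟩ := Sigma.mk.inj_iff.mp heq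
      obtain rfl := eq_of_heq hy
      exact ⟨(adj_iff hpos hbal heven hbig _ _).mpr hcnd, rfl⟩
  rw [hset, Set.ncard_coe_finset,
    Finset.card_image_of_injective _ (fun a b h => by simpa using h)]
  have hcnt := count_sub_val_mem (N j) (gg N i j) (gg_pos hpos i j) (gg_dvd_right i j)
    ((x.val : ZMod (gg N i j))) (DD A N i j) (DD_lt hpos hbal hbig i j)
  have hfeq : (Finset.univ.filter (fun y : Fin (N j) => cnd A N i j x.val y.val)) =
      (Finset.univ.filter
        (fun y : Fin (N j) =>
          (((x.val : ZMod (gg N i j)) - (y.val : ZMod (gg N i j))).val ∈ DD A N i j))) :=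
    Finset.filter_congr (fun y _ => Iff.rfl)
  rw [hfeq, hcnt, card_DD hpos hbal heven hbig i j]

end construction

end PerfectAux


/-- Every matrix satisfying weak symmetry and consistency is the colour adjacency
matrix of a perfect colouring of some finite simple graph. -/
theorem exists_graph_of_weakSymm_consistency {m : ℕ} (A : Matrix (Fin m) (Fin m) ℕ)
    (h1 : ∀ i j : Fin m, A i j = 0 ↔ A j i = 0)
    (h2 : ∀ t : ℕ, 2 ≤ t → ∀ n : Fin t → Fin m, Function.Injective n →
      (∏ k : Fin t, A (n k) (n (finRotate t k))) =
        ∏ k : Fin t, A (n (finRotate t k)) (n k)) :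
    ∃ (N : ℕ) (G : SimpleGraph (Fin N)) (c : Fin N → Fin m),
      IsPerfectColoring G c A := by
  classical
  obtain ⟨n, hn, hbal0⟩ := PerfectAux.exists_weights A h1 h2
  set B := Finset.univ.sup (fun i => Finset.univ.sup (fun j => A i j)) with hB
  have hAB : ∀ i j, A i j ≤ B := fun i j =>
    le_trans (Finset.le_sup (Finset.mem_univ j))
      (Finset.le_sup (f := fun i => Finset.univ.sup (fun j => A i j)) (Finset.mem_univ i))
  set N : Fin m → ℕ := fun i => (2 * B + 2) * n i with hN
  have hpos : ∀ i, 0 < N i := fun i => Nat.mul_pos (by omega) (hn i)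
  have hbal : ∀ i j, N i * A i j = N j * A j i := by
    intro i j
    simp only [hN]
    rw [mul_assoc, mul_assoc, hbal0 i j]
  have heven : ∀ i, N i % 2 = 0 := by
    intro i
    simp only [hN]
    have hrw : (2 * B + 2) * n i = 2 * ((B + 1) * n i) := by ring
    rw [hrw]
    exact Nat.mul_mod_right 2 _
  have hbig : ∀ i j, 2 * A i j + 2 ≤ N j := by
    intro i j
    have h1 : A i j ≤ B := hAB i j
    have h2 : 1 ≤ n j := hn j
    calc 2 * A i j + 2 ≤ (2 * B + 2) * 1 := by omega
      _ ≤ (2 * B + 2) * n j := Nat.mul_le_mul_left _ h2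
  set e := Fintype.equivFin ((i : Fin m) × Fin (N i)) with he
  refine ⟨Fintype.card ((i : Fin m) × Fin (N i)),
    { Adj := fun a b => (PerfectAux.bigG A N).Adj (e.symm a) (e.symm b)
      symm := ⟨fun a b h => (PerfectAux.bigG A N).adj_symm h⟩
      loopless := ⟨fun a h => (PerfectAux.bigG A N).irrefl h⟩ },
    fun a => (e.symm a).1, ?_, ?_⟩
  · intro i
    refine ⟨e ⟨i, ⟨0, hpos i⟩⟩, ?_⟩
    simp
  · intro v j
    have hs : {w | (PerfectAux.bigG A N).Adj (e.symm v) (e.symm w) ∧ (e.symm w).1 = j} =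
        e '' {w' | (PerfectAux.bigG A N).Adj (e.symm v) w' ∧ w'.1 = j} := by
      ext w
      simp only [Set.mem_setOf_eq, Set.mem_image]
      constructor
      · intro hw
        exact ⟨e.symm w, hw, by simp⟩
      · rintro ⟨w', hw', rfl⟩
        simpa using hw'
    show {w | (PerfectAux.bigG A N).Adj (e.symm v) (e.symm w) ∧ (e.symm w).1 = j}.ncard = _
    rw [hs, Set.ncard_image_of_injective _ e.injective]
    exact PerfectAux.degree_count hpos hbal heven hbig (e.symm v) j
end

section
/- A matrix A = (a_{ij}) ∈ ℕ^{2×2} is the colour adjacency matrix of some perfect 2-colouring of the 4-cube Q_4 if and only if there exists a permutation σ of {1,2} such that the matrix (a_{σ(i)σ(j)})_{i,j} is one of the following five matrices: [[0,4],[4,0]], [[1,3],[1,3]], [[1,3],[3,1]], [[2,2],[2,2]], [[3,1],[1,3]]. -/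
instance cubeAdjDec (d : ℕ) : DecidableRel (cubeGraph d).Adj := fun x y =>
  decidable_of_iff (∃ i, (x i ≠ y i) ∧ ∀ j, x j ≠ y j → j = i) Iff.rfl

abbrev V4 := Fin 4 → Bool

def fcnt (c : V4 → Fin 2) (v : V4) (j : Fin 2) : ℕ :=
  (Finset.univ.filter fun w => (cubeGraph 4).Adj v w ∧ c w = j).card

lemma perfect_iff (c : V4 → Fin 2) (A : Matrix (Fin 2) (Fin 2) ℕ) :
    IsPerfectColoring (cubeGraph 4) c A ↔
      (Function.Surjective c ∧ ∀ v j, fcnt c v j = A (c v) j) := by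
  unfold IsPerfectColoring fcnt
  have h : ∀ v j, {w : V4 | (cubeGraph 4).Adj v w ∧ c w = j}.ncard
      = (Finset.univ.filter fun w => (cubeGraph 4).Adj v w ∧ c w = j).card := by
    intro v j
    rw [← Set.ncard_coe_finset]
    congr 1
    ext w
    simp
  constructor
  · rintro ⟨h1, h2⟩; exact ⟨h1, fun v j => by rw [← h]; exact h2 v j⟩
  · rintro ⟨h1, h2⟩; exact ⟨h1, fun v j => by rw [h]; exact h2 v j⟩

lemma deg4 : ∀ v : V4, (Finset.univ.filter fun w => (cubeGraph 4).Adj v w).card = 4 := by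
  decide

lemma fin2_cases (t : Fin 2) : t = 0 ∨ t = 1 := by omega

lemma fcnt_add (c : V4 → Fin 2) (v : V4) : fcnt c v 0 + fcnt c v 1 = 4 := by
  unfold fcnt
  have hdisj : Disjoint
      (Finset.univ.filter fun w => (cubeGraph 4).Adj v w ∧ c w = 0)
      (Finset.univ.filter fun w => (cubeGraph 4).Adj v w ∧ c w = 1) := by
    rw [Finset.disjoint_left]
    rintro w hw hw'
    simp only [Finset.mem_filter] at hw hw'
    have h1 := hw.2.2
    have h2 := hw'.2.2
    rw [h1] at h2
    exact absurd h2 (by decide)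
  rw [← Finset.card_union_of_disjoint hdisj]
  have hunion : (Finset.univ.filter fun w => (cubeGraph 4).Adj v w ∧ c w = 0)
      ∪ (Finset.univ.filter fun w => (cubeGraph 4).Adj v w ∧ c w = 1)
      = Finset.univ.filter fun w => (cubeGraph 4).Adj v w := by
    ext w
    simp only [Finset.mem_union, Finset.mem_filter, Finset.mem_univ, true_and]
    rcases fin2_cases (c w) with h | h <;> simp [h]
  rw [hunion, deg4]

lemma closed_all (S : Set V4)
    (hcl : ∀ v ∈ S, ∀ w, (cubeGraph 4).Adj v w → w ∈ S) :
    ∀ x ∈ S, ∀ y, y ∈ S := by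
  suffices H : ∀ k : ℕ, ∀ x ∈ S, ∀ y : V4,
      (Finset.univ.filter fun i => x i ≠ y i).card ≤ k → y ∈ S by
    intro x hx y
    exact H 4 x hx y (le_trans (Finset.card_filter_le _ _) (by simp))
  intro k
  induction k with
  | zero =>
    intro x hx y hc
    have hxy : x = y := by
      funext i
      by_contra hne
      have hi : i ∈ Finset.univ.filter fun i => x i ≠ y i := by simp [hne]
      have := Finset.card_pos.mpr ⟨i, hi⟩
      omega
    exact hxy ▸ hx
  | succ k ih =>
    intro x hx y hc
    by_cases hxy : x = y
    · exact hxy ▸ hx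
    · obtain ⟨i, hi⟩ := Function.ne_iff.mp hxy
      set x' := Function.update x i (y i) with hx'
      have hadj : (cubeGraph 4).Adj x x' := by
        refine ⟨i, ?_, ?_⟩
        · simpa [hx', Function.update_self] using hi
        · intro j hj
          by_contra hji
          rw [hx', Function.update_of_ne hji] at hj
          exact hj rfl
      have hx'S := hcl x hx x' hadj
      refine ih x' hx'S y ?_
      have hsub : (Finset.univ.filter fun j => x' j ≠ y j)
          = (Finset.univ.filter fun j => x j ≠ y j).erase i := by
        ext j
        simp only [Finset.mem_filter, Finset.mem_univ, true_and, Finset.mem_erase]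
        constructor
        · intro hj
          rcases eq_or_ne j i with rfl | hji
          · exact (hj (by rw [hx', Function.update_self])).elim
          · rw [hx', Function.update_of_ne hji] at hj
            exact ⟨hji, hj⟩
        · rintro ⟨hji, hj⟩
          rwa [hx', Function.update_of_ne hji]
      have hmem : i ∈ Finset.univ.filter fun j => x j ≠ y j := by simp [hi]
      rw [hsub, Finset.card_erase_of_mem hmem]
      omega

lemma double_count (c : V4 → Fin 2) :
    ∑ v ∈ Finset.univ.filter (fun v => c v = 0), fcnt c v 1
      = ∑ w ∈ Finset.univ.filter (fun w => c w = 1), fcnt c w 0 := by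
  unfold fcnt
  simp only [Finset.card_filter]
  rw [Finset.sum_filter, Finset.sum_filter]
  have hpull : ∀ (P : Prop) [Decidable P] (g : V4 → ℕ),
      (if P then ∑ i : V4, g i else 0) = ∑ i : V4, if P then g i else 0 := by
    intro P _ g
    split_ifs <;> simp
  simp only [hpull]
  rw [Finset.sum_comm (s := (Finset.univ : Finset V4)) (t := (Finset.univ : Finset V4))]
  apply Finset.sum_congr rfl
  intro v _
  apply Finset.sum_congr rfl
  intro w _
  have hadj : (cubeGraph 4).Adj v w ↔ (cubeGraph 4).Adj w v := (cubeGraph 4).adj_comm v w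
  split_ifs <;> simp_all

lemma sum_fcnt (c : V4 → Fin 2) (A : Matrix (Fin 2) (Fin 2) ℕ)
    (hA : ∀ v j, fcnt c v j = A (c v) j) (i j : Fin 2) :
    ∑ v ∈ Finset.univ.filter (fun v => c v = i), fcnt c v j
      = (Finset.univ.filter (fun v => c v = i)).card * A i j := by
  rw [Finset.sum_congr rfl (fun v hv => ?_), Finset.sum_const, smul_eq_mul]
  rw [hA v j]
  congr 1
  exact (Finset.mem_filter.mp hv).2

lemma ex_M1 : ∃ c : V4 → Fin 2, IsPerfectColoring (cubeGraph 4) c !![0,4;4,0] := by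
  refine ⟨fun v => if xor (xor (v 0) (v 1)) (xor (v 2) (v 3)) then 1 else 0, ?_⟩
  rw [perfect_iff]
  exact ⟨by decide, by decide⟩

lemma ex_M2 : ∃ c : V4 → Fin 2, IsPerfectColoring (cubeGraph 4) c !![1,3;1,3] := by
  refine ⟨fun v => if v 0 = v 1 ∧ v 1 = v 2 then 0 else 1, ?_⟩
  rw [perfect_iff]
  exact ⟨by decide, by decide⟩

lemma ex_M2' : ∃ c : V4 → Fin 2, IsPerfectColoring (cubeGraph 4) c !![3,1;3,1] := by
  refine ⟨fun v => if v 0 = v 1 ∧ v 1 = v 2 then 1 else 0, ?_⟩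
  rw [perfect_iff]
  exact ⟨by decide, by decide⟩

lemma ex_M3 : ∃ c : V4 → Fin 2, IsPerfectColoring (cubeGraph 4) c !![1,3;3,1] := by
  refine ⟨fun v => if xor (xor (v 0) (v 1)) (v 2) then 1 else 0, ?_⟩
  rw [perfect_iff]
  exact ⟨by decide, by decide⟩

lemma ex_M4 : ∃ c : V4 → Fin 2, IsPerfectColoring (cubeGraph 4) c !![2,2;2,2] := by
  refine ⟨fun v => if xor (v 0) (v 1) then 1 else 0, ?_⟩
  rw [perfect_iff]
  exact ⟨by decide, by decide⟩

lemma ex_M5 : ∃ c : V4 → Fin 2, IsPerfectColoring (cubeGraph 4) c !![3,1;1,3] := by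
  refine ⟨fun v => if v 0 then 1 else 0, ?_⟩
  rw [perfect_iff]
  exact ⟨by decide, by decide⟩

lemma perm_two : ∀ σ : Equiv.Perm (Fin 2), σ = 1 ∨ σ = Equiv.swap 0 1 := by decide

lemma unperm (σ : Equiv.Perm (Fin 2)) (A M : Matrix (Fin 2) (Fin 2) ℕ)
    (h : (Matrix.of fun i j => A (σ i) (σ j)) = M) :
    A = Matrix.of fun i j => M (σ⁻¹ i) (σ⁻¹ j) := by
  ext i j
  have := congrFun (congrFun h (σ⁻¹ i)) (σ⁻¹ j)
  simp only [Matrix.of_apply, Equiv.Perm.coe_inv, Equiv.apply_symm_apply] at this ⊢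
  exact this.symm ▸ rfl

/-- Classification of all colour adjacency matrices of perfect 2-colourings of the
4-cube, up to permutation of colours. -/
theorem perfect_two_colorings_of_fourCube (A : Matrix (Fin 2) (Fin 2) ℕ) :
    (∃ c : (Fin 4 → Bool) → Fin 2, IsPerfectColoring (cubeGraph 4) c A) ↔
    ∃ σ : Equiv.Perm (Fin 2),
      (Matrix.of fun i j => A (σ i) (σ j)) ∈
        ({!![0,4;4,0], !![1,3;1,3], !![1,3;3,1], !![2,2;2,2], !![3,1;1,3]} :
          Set (Matrix (Fin 2) (Fin 2) ℕ)) := by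
  constructor
  · rintro ⟨c, hc⟩
    rw [perfect_iff] at hc
    obtain ⟨hsurj, hcnt⟩ := hc
    obtain ⟨v0, hv0⟩ := hsurj 0
    obtain ⟨v1, hv1⟩ := hsurj 1
    set n0 := (Finset.univ.filter (fun v => c v = 0)).card with hn0
    set n1 := (Finset.univ.filter (fun v => c v = 1)).card with hn1
    have hntot : n0 + n1 = 16 := by
      rw [hn0, hn1]
      rw [show (Finset.univ.filter (fun v => c v = (1:Fin 2)))
          = (Finset.univ.filter (fun v => ¬ c v = 0)) from by
        ext v; simp only [Finset.mem_filter, Finset.mem_univ, true_and]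
        rcases fin2_cases (c v) with h | h <;> simp [h]]
      rw [Finset.card_filter_add_card_filter_not]
      simp
    have hn0pos : 1 ≤ n0 := Finset.card_pos.mpr ⟨v0, by simp [hv0]⟩
    have hn1pos : 1 ≤ n1 := Finset.card_pos.mpr ⟨v1, by simp [hv1]⟩
    have hedge : n0 * A 0 1 = n1 * A 1 0 := by
      rw [hn0, hn1, ← sum_fcnt c A hcnt 0 1, ← sum_fcnt c A hcnt 1 0]
      exact double_count c
    have hrow0 : A 0 0 + A 0 1 = 4 := by
      have h := fcnt_add c v0
      rw [hcnt v0 0, hcnt v0 1, hv0] at h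
      exact h
    have hrow1 : A 1 0 + A 1 1 = 4 := by
      have h := fcnt_add c v1
      rw [hcnt v1 0, hcnt v1 1, hv1] at h
      exact h
    have hA01pos : 1 ≤ A 0 1 := by
      by_contra h
      have hz : A 0 1 = 0 := by omega
      have hclosed : ∀ v ∈ {v : V4 | c v = 0}, ∀ w, (cubeGraph 4).Adj v w →
          w ∈ {v : V4 | c v = 0} := by
        intro v hv w hw
        have h1 : fcnt c v 1 = 0 := by
          rw [hcnt v 1, Set.mem_setOf_eq.mp hv, hz]
        have hnm : w ∉ Finset.univ.filter
            fun w => (cubeGraph 4).Adj v w ∧ c w = 1 := by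
          rw [Finset.card_eq_zero.mp h1]
          exact Finset.notMem_empty w
        simp only [Finset.mem_filter, Finset.mem_univ, true_and, not_and] at hnm
        have := hnm hw
        rcases fin2_cases (c w) with h' | h'
        · exact h'
        · exact absurd h' this
      have := closed_all _ hclosed v0 hv0 v1
      simp only [Set.mem_setOf_eq, hv1] at this
      exact absurd this (by decide)
    have hA10pos : 1 ≤ A 1 0 := by
      rcases Nat.eq_zero_or_pos (A 1 0) with h | h
      · rw [h, Nat.mul_zero] at hedge
        rcases Nat.mul_eq_zero.mp hedge with h' | h' <;> omega
      · omega
    have hcases : (A 0 1 = 4 ∧ A 1 0 = 4) ∨ (A 0 1 = 3 ∧ A 1 0 = 1) ∨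
        (A 0 1 = 1 ∧ A 1 0 = 3) ∨ (A 0 1 = 3 ∧ A 1 0 = 3) ∨
        (A 0 1 = 2 ∧ A 1 0 = 2) ∨ (A 0 1 = 1 ∧ A 1 0 = 1) := by
      have h1 : A 0 1 ≤ 4 := by omega
      have h2 : A 1 0 ≤ 4 := by omega
      interval_cases h : A 0 1 <;> interval_cases h' : A 1 0 <;> omega
    simp only [Set.mem_insert_iff, Set.mem_singleton_iff]
    rcases hcases with ⟨h1, h2⟩ | ⟨h1, h2⟩ | ⟨h1, h2⟩ | ⟨h1, h2⟩ | ⟨h1, h2⟩ | ⟨h1, h2⟩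
    · refine ⟨1, Or.inl ?_⟩
      ext i j; fin_cases i <;> fin_cases j <;>
        simp [Matrix.of_apply] <;> omega
    · refine ⟨1, Or.inr (Or.inl ?_)⟩
      ext i j; fin_cases i <;> fin_cases j <;>
        simp [Matrix.of_apply] <;> omega
    · refine ⟨Equiv.swap 0 1, Or.inr (Or.inl ?_)⟩
      ext i j; fin_cases i <;> fin_cases j <;>
        simp [Matrix.of_apply, Equiv.swap_apply_left, Equiv.swap_apply_right] <;> omega
    · refine ⟨1, Or.inr (Or.inr (Or.inl ?_))⟩
      ext i j; fin_cases i <;> fin_cases j <;>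
        simp [Matrix.of_apply] <;> omega
    · refine ⟨1, Or.inr (Or.inr (Or.inr (Or.inl ?_)))⟩
      ext i j; fin_cases i <;> fin_cases j <;>
        simp [Matrix.of_apply] <;> omega
    · refine ⟨1, Or.inr (Or.inr (Or.inr (Or.inr ?_)))⟩
      ext i j; fin_cases i <;> fin_cases j <;>
        simp [Matrix.of_apply] <;> omega
  · rintro ⟨σ, hmem⟩
    simp only [Set.mem_insert_iff, Set.mem_singleton_iff] at hmem
    rcases perm_two σ with rfl | rfl
    · rcases hmem with h | h | h | h | h <;> rw [unperm _ _ _ h]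
      · rw [show (Matrix.of fun i j => (!![0,4;4,0] : Matrix (Fin 2) (Fin 2) ℕ)
            ((1:Equiv.Perm (Fin 2))⁻¹ i) ((1:Equiv.Perm (Fin 2))⁻¹ j)) = !![0,4;4,0]
          from by decide]
        exact ex_M1
      · rw [show (Matrix.of fun i j => (!![1,3;1,3] : Matrix (Fin 2) (Fin 2) ℕ)
            ((1:Equiv.Perm (Fin 2))⁻¹ i) ((1:Equiv.Perm (Fin 2))⁻¹ j)) = !![1,3;1,3]
          from by decide]
        exact ex_M2
      · rw [show (Matrix.of fun i j => (!![1,3;3,1] : Matrix (Fin 2) (Fin 2) ℕ)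
            ((1:Equiv.Perm (Fin 2))⁻¹ i) ((1:Equiv.Perm (Fin 2))⁻¹ j)) = !![1,3;3,1]
          from by decide]
        exact ex_M3
      · rw [show (Matrix.of fun i j => (!![2,2;2,2] : Matrix (Fin 2) (Fin 2) ℕ)
            ((1:Equiv.Perm (Fin 2))⁻¹ i) ((1:Equiv.Perm (Fin 2))⁻¹ j)) = !![2,2;2,2]
          from by decide]
        exact ex_M4
      · rw [show (Matrix.of fun i j => (!![3,1;1,3] : Matrix (Fin 2) (Fin 2) ℕ)
            ((1:Equiv.Perm (Fin 2))⁻¹ i) ((1:Equiv.Perm (Fin 2))⁻¹ j)) = !![3,1;1,3]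
          from by decide]
        exact ex_M5
    · rcases hmem with h | h | h | h | h <;> rw [unperm _ _ _ h]
      · rw [show (Matrix.of fun i j => (!![0,4;4,0] : Matrix (Fin 2) (Fin 2) ℕ)
            ((Equiv.swap 0 1)⁻¹ i) ((Equiv.swap 0 1)⁻¹ j)) = !![0,4;4,0]
          from by decide]
        exact ex_M1
      · rw [show (Matrix.of fun i j => (!![1,3;1,3] : Matrix (Fin 2) (Fin 2) ℕ)
            ((Equiv.swap 0 1)⁻¹ i) ((Equiv.swap 0 1)⁻¹ j)) = !![3,1;3,1]
          from by decide]
        exact ex_M2'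
      · rw [show (Matrix.of fun i j => (!![1,3;3,1] : Matrix (Fin 2) (Fin 2) ℕ)
            ((Equiv.swap 0 1)⁻¹ i) ((Equiv.swap 0 1)⁻¹ j)) = !![1,3;3,1]
          from by decide]
        exact ex_M3
      · rw [show (Matrix.of fun i j => (!![2,2;2,2] : Matrix (Fin 2) (Fin 2) ℕ)
            ((Equiv.swap 0 1)⁻¹ i) ((Equiv.swap 0 1)⁻¹ j)) = !![2,2;2,2]
          from by decide]
        exact ex_M4
      · rw [show (Matrix.of fun i j => (!![3,1;1,3] : Matrix (Fin 2) (Fin 2) ℕ)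
            ((Equiv.swap 0 1)⁻¹ i) ((Equiv.swap 0 1)⁻¹ j)) = !![3,1;1,3]
          from by decide]
        exact ex_M5
end

section
/- A matrix A = (a_{ij}) ∈ ℕ^{2×2} is the colour adjacency matrix of some perfect 2-colouring of the 5-cube Q_5 if and only if there exists a permutation σ of {1,2} such that the matrix (a_{σ(i)σ(j)})_{i,j} is one of the following six matrices: [[0,5],[5,0]], [[1,4],[4,1]], [[2,3],[1,4]], [[2,3],[3,2]], [[3,2],[2,3]], [[4,1],[1,4]]. -/
namespace CubeAux

abbrev V5 := Fin 5 → Bool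

instance cubeAdjDec (d : ℕ) : DecidableRel (cubeGraph d).Adj := fun x y =>
  decidable_of_iff (∃ i, x i ≠ y i ∧ ∀ j, x j ≠ y j → j = i) Iff.rfl

lemma ncard_setOf {α : Type*} [Fintype α] (P : α → Prop) [DecidablePred P] :
    {w | P w}.ncard = (Finset.univ.filter P).card := by
  rw [Set.ncard_eq_toFinset_card', Set.toFinset_setOf]

lemma isPerfect_iff (c : V5 → Fin 2) (A : Matrix (Fin 2) (Fin 2) ℕ) :
    IsPerfectColoring (cubeGraph 5) c A ↔
      (Function.Surjective c ∧ ∀ v : V5, ∀ j : Fin 2,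
        (Finset.univ.filter fun w => (cubeGraph 5).Adj v w ∧ c w = j).card = A (c v) j) := by
  unfold IsPerfectColoring
  simp only [ncard_setOf]

lemma fin2_ne0 (x : Fin 2) : ¬ x = 0 ↔ x = 1 := by omega

/-- transfer of perfect colorings along a permutation of the colors -/
lemma transfer {V : Type*} [Fintype V] (G : SimpleGraph V) (σ : Equiv.Perm (Fin 2))
    {c : V → Fin 2} {M A : Matrix (Fin 2) (Fin 2) ℕ}
    (h : IsPerfectColoring G c M) (hA : ∀ i j, A (σ i) (σ j) = M i j) :
    IsPerfectColoring G (σ ∘ c) A := by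
  obtain ⟨hsurj, hcount⟩ := h
  constructor
  · exact σ.surjective.comp hsurj
  · intro v j
    have hset : {w | G.Adj v w ∧ (σ ∘ c) w = j} = {w | G.Adj v w ∧ c w = σ.symm j} := by
      ext w
      simp only [Set.mem_setOf_eq, Function.comp_apply, Equiv.apply_eq_iff_eq_symm_apply]
    rw [hset, hcount v (σ.symm j)]
    have h2 := hA (c v) (σ.symm j)
    rw [Equiv.apply_symm_apply] at h2
    rw [← h2]
    rfl

/-! ### Coordinate flips -/

def flip (i : Fin 5) (v : V5) : V5 := Function.update v i (!(v i))

lemma flip_apply (i : Fin 5) (v : V5) (j : Fin 5) :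
    flip i v j = if j = i then !(v j) else v j := by
  unfold flip
  rw [Function.update_apply]
  by_cases h : j = i
  · subst h; simp
  · simp [h]

lemma adj_flip (v : V5) (i : Fin 5) : (cubeGraph 5).Adj v (flip i v) := by
  refine ⟨i, ?_, fun j hj => ?_⟩
  · show v i ≠ flip i v i
    rw [flip_apply]
    simp
  · have hj' : v j ≠ flip i v j := hj
    by_contra hne
    rw [flip_apply, if_neg hne] at hj'
    exact hj' rfl

lemma flip_flip (i : Fin 5) (v : V5) : flip i (flip i v) = v := by
  funext j
  simp only [flip_apply]
  by_cases h : j = i <;> simp [h]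

lemma flip_comm {i j : Fin 5} (h : i ≠ j) (v : V5) : flip i (flip j v) = flip j (flip i v) := by
  funext k
  simp only [flip_apply]
  by_cases hki : k = i <;> by_cases hkj : k = j <;> simp_all

lemma eq_flip_of_adj {v w : V5} (h : (cubeGraph 5).Adj v w) : ∃ i, w = flip i v := by
  obtain ⟨i, hi, hu⟩ := h
  have hi' : v i ≠ w i := hi
  refine ⟨i, funext fun j => ?_⟩
  rw [flip_apply]
  by_cases hj : j = i
  · subst hj
    rw [if_pos rfl]
    exact Bool.eq_not_of_ne (fun e => hi' e.symm)
  · rw [if_neg hj]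
    by_contra hne
    exact hj (hu j (fun e => hne e.symm))

lemma flip_inj (v : V5) : Function.Injective (fun i => flip i v) := by
  intro i j h
  by_contra hne
  have h2 := congrFun h i
  simp only [flip_apply, if_pos rfl, if_neg hne] at h2
  cases hvi : v i <;> rw [hvi] at h2 <;> exact absurd h2 (by simp)

/-! ### Counting lemmas -/

section Counting
variable {c : V5 → Fin 2} {A : Matrix (Fin 2) (Fin 2) ℕ}
variable (hcount : ∀ v : V5, ∀ j : Fin 2,
  (Finset.univ.filter fun w => (cubeGraph 5).Adj v w ∧ c w = j).card = A (c v) j)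

set_option maxRecDepth 100000 in
lemma degree_five : ∀ v : V5, (Finset.univ.filter fun w => (cubeGraph 5).Adj v w).card = 5 := by
  decide

include hcount in
lemma row_sum (v : V5) : A (c v) 0 + A (c v) 1 = 5 := by
  have h := Finset.card_filter_add_card_filter_not
    (s := Finset.univ.filter fun w => (cubeGraph 5).Adj v w) (p := fun w => c w = 0)
  rw [Finset.filter_filter, Finset.filter_filter, degree_five v] at h
  simp only [fin2_ne0] at h
  rw [hcount v 0, hcount v 1] at h
  exact h

include hcount in
lemma edge_count :
    (Finset.univ.filter fun v => c v = 0).card * A 0 1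
      = (Finset.univ.filter fun v => c v = 1).card * A 1 0 := by
  classical
  have key1 : ∀ v : V5, (if c v = 0 then A 0 1 else 0)
      = ∑ w : V5, if (cubeGraph 5).Adj v w ∧ c v = 0 ∧ c w = 1 then 1 else 0 := by
    intro v
    by_cases h : c v = 0
    · rw [if_pos h]
      have h1 := hcount v 1
      rw [h] at h1
      rw [← h1, Finset.card_filter]
      exact Finset.sum_congr rfl fun w _ => if_congr (by tauto) rfl rfl
    · rw [if_neg h, eq_comm]
      exact Finset.sum_eq_zero fun w _ => if_neg (by tauto)
  have key2 : ∀ w : V5, (if c w = 1 then A 1 0 else 0)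
      = ∑ v : V5, if (cubeGraph 5).Adj v w ∧ c v = 0 ∧ c w = 1 then 1 else 0 := by
    intro w
    by_cases h : c w = 1
    · rw [if_pos h]
      have h1 := hcount w 0
      rw [h] at h1
      rw [← h1, Finset.card_filter]
      refine Finset.sum_congr rfl fun v _ => if_congr ?_ rfl rfl
      rw [(cubeGraph 5).adj_comm]
      tauto
    · rw [if_neg h, eq_comm]
      exact Finset.sum_eq_zero fun v _ => if_neg (by tauto)
  have hL : (Finset.univ.filter fun v => c v = 0).card * A 0 1
      = ∑ v : V5, ∑ w : V5, if (cubeGraph 5).Adj v w ∧ c v = 0 ∧ c w = 1 then 1 else 0 := by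
    have e1 : ∑ v : V5, (if c v = 0 then A 0 1 else 0)
        = (Finset.univ.filter fun v => c v = 0).card * A 0 1 := by
      rw [← Finset.sum_filter, Finset.sum_const, smul_eq_mul]
    rw [← e1]
    exact Finset.sum_congr rfl fun v _ => key1 v
  have hR : (Finset.univ.filter fun v => c v = 1).card * A 1 0
      = ∑ w : V5, ∑ v : V5, if (cubeGraph 5).Adj v w ∧ c v = 0 ∧ c w = 1 then 1 else 0 := by
    have e1 : ∑ w : V5, (if c w = 1 then A 1 0 else 0)
        = (Finset.univ.filter fun w => c w = 1).card * A 1 0 := by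
      rw [← Finset.sum_filter, Finset.sum_const, smul_eq_mul]
    rw [← e1]
    exact Finset.sum_congr rfl fun w _ => key2 w
  rw [hL, hR, Finset.sum_comm]

lemma card_classes :
    (Finset.univ.filter fun v => c v = 0).card
      + (Finset.univ.filter fun v => c v = 1).card = 32 := by
  have h := Finset.card_filter_add_card_filter_not
    (s := (Finset.univ : Finset V5)) (p := fun v => c v = 0)
  simp only [fin2_ne0] at h
  rw [h]
  decide

include hcount in
/-- independence of colour class 0 when `A 0 0 = 0` -/
lemma indep0 (h00 : A 0 0 = 0) {v w : V5} (hv : c v = 0)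
    (hadj : (cubeGraph 5).Adj v w) : c w = 1 := by
  have h1 := hcount v 0
  rw [hv, h00, Finset.card_eq_zero] at h1
  have hw : w ∉ Finset.univ.filter fun w => (cubeGraph 5).Adj v w ∧ c w = 0 := by
    rw [h1]; exact Finset.notMem_empty w
  have : ¬ (c w = 0) := fun e => hw (Finset.mem_filter.2 ⟨Finset.mem_univ _, hadj, e⟩)
  omega

/-- a colouring whose classes are closed under adjacency is constant -/
lemma const_of_closed {c : V5 → Fin 2} (h : ∀ v w, (cubeGraph 5).Adj v w → c w = c v)
    (v w : V5) : c v = c w := by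
  suffices H : ∀ n (v w : V5), (Finset.univ.filter fun i => v i ≠ w i).card = n → c v = c w from
    H _ v w rfl
  intro n
  induction n with
  | zero =>
    intro v w hc
    rw [Finset.card_eq_zero] at hc
    have : v = w := by
      funext i
      by_contra hne
      have hmem : i ∈ Finset.univ.filter fun i => v i ≠ w i :=
        Finset.mem_filter.2 ⟨Finset.mem_univ _, hne⟩
      rw [hc] at hmem
      exact Finset.notMem_empty i hmem
    rw [this]
  | succ n ih =>
    intro v w hc
    have hpos : 0 < (Finset.univ.filter fun i => v i ≠ w i).card := by omega
    obtain ⟨i, hi⟩ := Finset.card_pos.1 hpos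
    have hvi : v i ≠ w i := (Finset.mem_filter.1 hi).2
    have hupd : Function.update v i (w i) = flip i v := by
      funext j
      rw [flip_apply, Function.update_apply]
      by_cases hj : j = i
      · subst hj
        rw [if_pos rfl, if_pos rfl]
        exact (Bool.eq_not_of_ne (fun e => hvi e.symm))
      · rw [if_neg hj, if_neg hj]
    have hadj : (cubeGraph 5).Adj v (Function.update v i (w i)) := by
      rw [hupd]; exact adj_flip v i
    have hstep : c (Function.update v i (w i)) = c v := h v _ hadj
    have hcard : (Finset.univ.filter fun j => Function.update v i (w i) j ≠ w j).card = n := by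
      have hs : (Finset.univ.filter fun j => Function.update v i (w i) j ≠ w j)
          = (Finset.univ.filter fun j => v j ≠ w j).erase i := by
        ext j
        simp only [Finset.mem_filter, Finset.mem_erase, Finset.mem_univ, true_and]
        by_cases hj : j = i
        · subst hj
          rw [Function.update_self]
          simp
        · rw [Function.update_of_ne hj]
          simp [hj]
      rw [hs, Finset.card_erase_of_mem hi, hc]
      omega
    rw [← hstep]
    exact ih _ w hcard

include hcount in
/-- No perfect colouring of the 5-cube has matrix `!![0,5;3,2]`. -/
lemma no_bad (h00 : A 0 0 = 0) (h01 : A 0 1 = 5) (h10 : A 1 0 = 3) : False := by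
  classical
  have hedge := edge_count hcount
  rw [h01, h10] at hedge
  have hsum := card_classes (c := c)
  set P0 := Finset.univ.filter fun v : V5 => c v = 0 with hP0
  have hn0 : P0.card = 12 := by omega
  -- find a vertex `v` with `c v = 1` and `c (flip (last) v) = 1`
  obtain ⟨v, hv1, hv1'⟩ : ∃ v : V5, c v = 1 ∧ c (flip (Fin.last 4) v) = 1 := by
    by_contra hcon
    push_neg at hcon
    have hsub : (Finset.univ : Finset V5) ⊆ P0 ∪ P0.image (flip (Fin.last 4)) := by
      intro u _
      by_cases h0 : c u = 0
      · exact Finset.mem_union_left _ (Finset.mem_filter.2 ⟨Finset.mem_univ _, h0⟩)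
      · have hu1 : c u = 1 := by omega
        have h2 := hcon u hu1
        have h0' : c (flip (Fin.last 4) u) = 0 := by omega
        refine Finset.mem_union_right _ (Finset.mem_image.2 ⟨flip (Fin.last 4) u,
          Finset.mem_filter.2 ⟨Finset.mem_univ _, h0'⟩, flip_flip _ _⟩)
    have h32 : (32 : ℕ) ≤ P0.card + (P0.image (flip (Fin.last 4))).card := by
      calc (32 : ℕ) = (Finset.univ : Finset V5).card := by decide
        _ ≤ (P0 ∪ P0.image (flip (Fin.last 4))).card := Finset.card_le_card hsub
        _ ≤ _ := Finset.card_union_le _ _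
    have himg : (P0.image (flip (Fin.last 4))).card ≤ 12 :=
      le_trans (Finset.card_image_le) (le_of_eq hn0)
    omega
  -- the two disjoint 3-sets of coordinates
  set v' := flip (Fin.last 4) v with hv'
  set s1 := Finset.univ.filter (fun i : Fin 4 => c (flip i.castSucc v) = 0) with hs1
  set s2 := Finset.univ.filter (fun i : Fin 4 => c (flip i.castSucc v') = 0) with hs2
  have hginj : ∀ u : V5, Function.Injective (fun i : Fin 4 => flip i.castSucc u) := by
    intro u i j h
    exact Fin.castSucc_injective 4 (flip_inj u h)
  have hcard3 : ∀ u : V5, c u = 1 → c (flip (Fin.last 4) u) = 1 →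
      (Finset.univ.filter (fun i : Fin 4 => c (flip i.castSucc u) = 0)).card = 3 := by
    intro u hu hu'
    have hF : (Finset.univ.filter fun w => (cubeGraph 5).Adj u w ∧ c w = 0)
        = (Finset.univ.filter (fun i : Fin 4 => c (flip i.castSucc u) = 0)).image
            (fun i : Fin 4 => flip i.castSucc u) := by
      ext w
      simp only [Finset.mem_filter, Finset.mem_image, Finset.mem_univ, true_and]
      constructor
      · rintro ⟨hadj, hc0⟩
        obtain ⟨i, rfl⟩ := eq_flip_of_adj hadj
        have hne : i ≠ Fin.last 4 := by
          rintro rfl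
          rw [hu'] at hc0
          exact absurd hc0 (by omega)
        obtain ⟨i', rfl⟩ : ∃ j : Fin 4, i = j.castSucc :=
          ⟨i.castPred hne, (Fin.castSucc_castPred i hne).symm⟩
        exact ⟨i', hc0, rfl⟩
      · rintro ⟨i, hci, rfl⟩
        exact ⟨adj_flip u _, hci⟩
    have h3 := hcount u 0
    rw [hu, h10, hF, Finset.card_image_of_injective _ (hginj u)] at h3
    exact h3
  have hc1 : s1.card = 3 := hcard3 v hv1 hv1'
  have hc2 : s2.card = 3 := by
    refine hcard3 v' hv1' ?_
    rw [hv', flip_flip]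
    exact hv1
  have hdisj : Disjoint s1 s2 := by
    rw [Finset.disjoint_left]
    intro i h1 h2
    have hc10 : c (flip i.castSucc v) = 0 := (Finset.mem_filter.1 h1).2
    have hc20 : c (flip i.castSucc v') = 0 := (Finset.mem_filter.1 h2).2
    have he : flip i.castSucc v' = flip (Fin.last 4) (flip i.castSucc v) := by
      rw [hv']
      exact flip_comm (Fin.castSucc_lt_last i).ne v
    have := indep0 hcount h00 hc10 (adj_flip _ (Fin.last 4))
    rw [← he, hc20] at this
    exact absurd this (by omega)
  have hle : s1.card + s2.card ≤ 4 := by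
    rw [← Finset.card_union_of_disjoint hdisj]
    calc (s1 ∪ s2).card ≤ (Finset.univ : Finset (Fin 4)).card := Finset.card_le_univ _
      _ = 4 := by decide
  omega

end Counting

/-! ### The six explicit colourings -/

def c1 : V5 → Fin 2 := fun v => if v 0 then 1 else 0
def c2 : V5 → Fin 2 := fun v => if xor (v 0) (v 1) then 1 else 0
def c3 : V5 → Fin 2 := fun v => if xor (xor (v 0) (v 1)) (v 2) then 1 else 0
def c4 : V5 → Fin 2 := fun v => if xor (xor (v 0) (v 1)) (xor (v 2) (v 3)) then 1 else 0
def c5 : V5 → Fin 2 := fun v => if xor (xor (xor (v 0) (v 1)) (xor (v 2) (v 3))) (v 4) then 1 else 0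
def c6 : V5 → Fin 2 := fun v => if v 2 = v 3 ∧ v 3 = v 4 then 0 else 1

set_option maxRecDepth 100000 in
lemma perfect_c1 : IsPerfectColoring (cubeGraph 5) c1 !![4,1;1,4] :=
  (isPerfect_iff _ _).2 ⟨by decide, by decide⟩
set_option maxRecDepth 100000 in
lemma perfect_c2 : IsPerfectColoring (cubeGraph 5) c2 !![3,2;2,3] :=
  (isPerfect_iff _ _).2 ⟨by decide, by decide⟩
set_option maxRecDepth 100000 in
lemma perfect_c3 : IsPerfectColoring (cubeGraph 5) c3 !![2,3;3,2] :=
  (isPerfect_iff _ _).2 ⟨by decide, by decide⟩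
set_option maxRecDepth 100000 in
lemma perfect_c4 : IsPerfectColoring (cubeGraph 5) c4 !![1,4;4,1] :=
  (isPerfect_iff _ _).2 ⟨by decide, by decide⟩
set_option maxRecDepth 100000 in
lemma perfect_c5 : IsPerfectColoring (cubeGraph 5) c5 !![0,5;5,0] :=
  (isPerfect_iff _ _).2 ⟨by decide, by decide⟩
set_option maxRecDepth 100000 in
lemma perfect_c6 : IsPerfectColoring (cubeGraph 5) c6 !![2,3;1,4] :=
  (isPerfect_iff _ _).2 ⟨by decide, by decide⟩

end CubeAux

open CubeAux in
/-- Classification of all colour adjacency matrices of perfect 2-colourings of the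
5-cube, up to permutation of colours. -/
theorem perfect_two_colorings_of_fiveCube (A : Matrix (Fin 2) (Fin 2) ℕ) :
    (∃ c : (Fin 5 → Bool) → Fin 2, IsPerfectColoring (cubeGraph 5) c A) ↔
    ∃ σ : Equiv.Perm (Fin 2),
      (Matrix.of fun i j => A (σ i) (σ j)) ∈
        ({!![0,5;5,0], !![1,4;4,1], !![2,3;1,4], !![2,3;3,2], !![3,2;2,3],
          !![4,1;1,4]} : Set (Matrix (Fin 2) (Fin 2) ℕ)) := by
  constructor
  · rintro ⟨c, hpc⟩
    obtain ⟨hsurj, hcount⟩ := (isPerfect_iff c A).1 hpc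
    obtain ⟨v0, hv0⟩ := hsurj 0
    obtain ⟨v1, hv1⟩ := hsurj 1
    have h5a : A 0 0 + A 0 1 = 5 := by have h := row_sum hcount v0; rwa [hv0] at h
    have h5b : A 1 0 + A 1 1 = 5 := by have h := row_sum hcount v1; rwa [hv1] at h
    have hedge := edge_count hcount
    have hsum := card_classes (c := c)
    have hn0pos : 0 < (Finset.univ.filter fun v : V5 => c v = 0).card :=
      Finset.card_pos.2 ⟨v0, Finset.mem_filter.2 ⟨Finset.mem_univ _, hv0⟩⟩
    have hn1pos : 0 < (Finset.univ.filter fun v : V5 => c v = 1).card :=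
      Finset.card_pos.2 ⟨v1, Finset.mem_filter.2 ⟨Finset.mem_univ _, hv1⟩⟩
    -- the off-diagonal entries are positive
    have hboth : ¬ (A 0 1 = 0 ∧ A 1 0 = 0) := by
      rintro ⟨hb0, hq0⟩
      have hclosed : ∀ u w, (cubeGraph 5).Adj u w → c w = c u := by
        intro u w hadj
        rcases (show c u = 0 ∨ c u = 1 by omega) with h | h
        · have h1 := hcount u 1
          rw [h, hb0, Finset.card_eq_zero] at h1
          have hw : ¬ (c w = 1) := fun e => Finset.notMem_empty w
            (h1 ▸ Finset.mem_filter.2 ⟨Finset.mem_univ _, hadj, e⟩)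
          omega
        · have h1 := hcount u 0
          rw [h, hq0, Finset.card_eq_zero] at h1
          have hw : ¬ (c w = 0) := fun e => Finset.notMem_empty w
            (h1 ▸ Finset.mem_filter.2 ⟨Finset.mem_univ _, hadj, e⟩)
          omega
      have := const_of_closed hclosed v0 v1
      rw [hv0, hv1] at this
      exact absurd this (by omega)
    have hb_pos : 0 < A 0 1 := by
      by_contra hb
      have hb0 : A 0 1 = 0 := by omega
      rw [hb0, Nat.mul_zero] at hedge
      rcases Nat.mul_eq_zero.1 hedge.symm with h | h
      · exact absurd h (by omega)
      · exact hboth ⟨hb0, h⟩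
    have hq_pos : 0 < A 1 0 := by
      by_contra hq
      have hq0 : A 1 0 = 0 := by omega
      rw [hq0, Nat.mul_zero] at hedge
      rcases Nat.mul_eq_zero.1 hedge with h | h
      · exact absurd h (by omega)
      · exact hboth ⟨h, hq0⟩
    -- abstract the entries
    obtain ⟨a, ha⟩ : ∃ x, A 0 0 = x := ⟨_, rfl⟩
    obtain ⟨b, hb⟩ : ∃ x, A 0 1 = x := ⟨_, rfl⟩
    obtain ⟨q, hq⟩ : ∃ x, A 1 0 = x := ⟨_, rfl⟩
    obtain ⟨d, hd⟩ : ∃ x, A 1 1 = x := ⟨_, rfl⟩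
    rw [ha, hb] at h5a
    rw [hq, hd] at h5b
    rw [hb, hq] at hedge
    rw [hb] at hb_pos
    rw [hq] at hq_pos
    have hb5 : b ≤ 5 := by omega
    have hq5 : q ≤ 5 := by omega
    have hb1 : 1 ≤ b := hb_pos
    have hq1 : 1 ≤ q := hq_pos
    interval_cases b <;> interval_cases q
    · -- (b,q) = (1,1)
      have h1 : a = 4 := by omega
      have h2 : d = 4 := by omega
      refine ⟨1, ?_⟩
      rw [Matrix.eta_fin_two A, ha, hb, hq, hd, h1, h2]
      simp only [Set.mem_insert_iff, Set.mem_singleton_iff]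
      decide
    · omega
    · -- (b,q) = (1,3)
      have h1 : a = 4 := by omega
      have h2 : d = 2 := by omega
      refine ⟨Equiv.swap 0 1, ?_⟩
      rw [Matrix.eta_fin_two A, ha, hb, hq, hd, h1, h2]
      simp only [Set.mem_insert_iff, Set.mem_singleton_iff]
      decide
    · omega
    · omega
    · omega
    · -- (b,q) = (2,2)
      have h1 : a = 3 := by omega
      have h2 : d = 3 := by omega
      refine ⟨1, ?_⟩
      rw [Matrix.eta_fin_two A, ha, hb, hq, hd, h1, h2]
      simp only [Set.mem_insert_iff, Set.mem_singleton_iff]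
      decide
    · omega
    · omega
    · omega
    · -- (b,q) = (3,1)
      have h1 : a = 2 := by omega
      have h2 : d = 4 := by omega
      refine ⟨1, ?_⟩
      rw [Matrix.eta_fin_two A, ha, hb, hq, hd, h1, h2]
      simp only [Set.mem_insert_iff, Set.mem_singleton_iff]
      decide
    · omega
    · -- (b,q) = (3,3)
      have h1 : a = 2 := by omega
      have h2 : d = 2 := by omega
      refine ⟨1, ?_⟩
      rw [Matrix.eta_fin_two A, ha, hb, hq, hd, h1, h2]
      simp only [Set.mem_insert_iff, Set.mem_singleton_iff]
      decide
    · omega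
    · -- (3,5): impossible
      have h1 : a = 2 := by omega
      have h2 : d = 0 := by omega
      have hA : A = !![2,3;5,0] := by rw [Matrix.eta_fin_two A, ha, hb, hq, hd, h1, h2]
      have hpc' : IsPerfectColoring (cubeGraph 5) c !![2,3;5,0] := hA ▸ hpc
      have htr := transfer (cubeGraph 5) (Equiv.swap 0 1) hpc'
        (A := !![0,5;3,2]) (by intro i j; fin_cases i <;> fin_cases j <;> rfl)
      obtain ⟨-, hcount'⟩ := (isPerfect_iff _ _).1 htr
      exact (no_bad hcount' (by decide) (by decide) (by decide)).elim
    · omega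
    · omega
    · omega
    · -- (b,q) = (4,4)
      have h1 : a = 1 := by omega
      have h2 : d = 1 := by omega
      refine ⟨1, ?_⟩
      rw [Matrix.eta_fin_two A, ha, hb, hq, hd, h1, h2]
      simp only [Set.mem_insert_iff, Set.mem_singleton_iff]
      decide
    · omega
    · omega
    · omega
    · -- (5,3): impossible
      exact (no_bad hcount (by rw [ha]; omega) hb hq).elim
    · omega
    · -- (b,q) = (5,5)
      have h1 : a = 0 := by omega
      have h2 : d = 0 := by omega
      refine ⟨1, ?_⟩
      rw [Matrix.eta_fin_two A, ha, hb, hq, hd, h1, h2]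
      simp only [Set.mem_insert_iff, Set.mem_singleton_iff]
      decide
  · rintro ⟨σ, hmem⟩
    simp only [Set.mem_insert_iff, Set.mem_singleton_iff] at hmem
    rcases hmem with h | h | h | h | h | h
    · exact ⟨σ ∘ c5, transfer _ σ perfect_c5 (fun i j => by rw [← h]; rfl)⟩
    · exact ⟨σ ∘ c4, transfer _ σ perfect_c4 (fun i j => by rw [← h]; rfl)⟩
    · exact ⟨σ ∘ c6, transfer _ σ perfect_c6 (fun i j => by rw [← h]; rfl)⟩
    · exact ⟨σ ∘ c3, transfer _ σ perfect_c3 (fun i j => by rw [← h]; rfl)⟩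
    · exact ⟨σ ∘ c2, transfer _ σ perfect_c2 (fun i j => by rw [← h]; rfl)⟩
    · exact ⟨σ ∘ c1, transfer _ σ perfect_c1 (fun i j => by rw [← h]; rfl)⟩
end

section
/- There is no perfect 2-colouring of the 5-cube Q_5 with colour adjacency matrix [[0,5],[3,2]], i.e. no 2-colouring of the vertices of Q_5 in which every vertex of colour 1 has 0 neighbours of colour 1 and 5 neighbours of colour 2, and every vertex of colour 2 has 3 neighbours of colour 1 and 2 neighbours of colour 2. -/
private def flip5 (i : Fin 5) (v : Fin 5 → Bool) : Fin 5 → Bool :=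
  Function.update v i (!(v i))

private lemma flip5_apply_self (i : Fin 5) (v : Fin 5 → Bool) : flip5 i v i = !(v i) :=
  Function.update_self i _ v

private lemma flip5_apply_ne (i j : Fin 5) (v : Fin 5 → Bool) (h : j ≠ i) :
    flip5 i v j = v j := Function.update_of_ne h _ v

private lemma adj_iff (v w : Fin 5 → Bool) :
    (cubeGraph 5).Adj v w ↔ ∃ i, w = flip5 i v := by
  constructor
  · rintro ⟨i, hi, hu⟩
    refine ⟨i, funext fun j => ?_⟩
    by_cases hj : j = i
    · subst hj
      rw [flip5_apply_self]
      revert hi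
      cases v j <;> cases w j <;> simp
    · rw [flip5_apply_ne i j v hj]
      by_contra hne
      exact hj (hu j (Ne.symm hne))
  · rintro ⟨i, rfl⟩
    refine ⟨i, by simp [flip5_apply_self], fun j hj => ?_⟩
    simp only at hj
    by_contra hne
    rw [flip5_apply_ne i j v hne] at hj
    exact hj rfl

private lemma flip5_injective (v : Fin 5 → Bool) :
    Function.Injective (fun i => flip5 i v) := by
  intro i j h
  by_contra hne
  have := congrFun h i
  simp only at this
  rw [flip5_apply_self, flip5_apply_ne j i v hne] at this
  exact (Bool.not_ne_self (v i)) this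

private lemma count_flip (c : (Fin 5 → Bool) → Fin 2) (v : Fin 5 → Bool) (j : Fin 2) :
    {w | (cubeGraph 5).Adj v w ∧ c w = j}.ncard
      = (Finset.univ.filter (fun i : Fin 5 => c (flip5 i v) = j)).card := by
  have hset : {w | (cubeGraph 5).Adj v w ∧ c w = j}
      = (fun i => flip5 i v) '' {i : Fin 5 | c (flip5 i v) = j} := by
    ext w
    simp only [Set.mem_setOf_eq, Set.mem_image, adj_iff]
    constructor
    · rintro ⟨⟨i, rfl⟩, hc⟩; exact ⟨i, hc, rfl⟩
    · rintro ⟨i, hc, rfl⟩; exact ⟨⟨i, rfl⟩, hc⟩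
  rw [hset, Set.ncard_image_of_injective _ (flip5_injective v)]
  simp [Set.ncard_eq_toFinset_card']

private def vtx (n : ℕ) : Fin 5 → Bool := fun i => n.testBit i

private lemma flip5_vtx (i : Fin 5) (n : ℕ) :
    flip5 i (vtx n) = vtx (n ^^^ 2 ^ (i : ℕ)) := by
  funext j
  by_cases hj : j = i
  · subst hj
    rw [flip5_apply_self]
    simp [vtx, Nat.testBit_xor, Nat.testBit_two_pow]
  · rw [flip5_apply_ne i j _ hj]
    simp only [vtx, Nat.testBit_xor, Nat.testBit_two_pow]
    have : ¬((i : ℕ) = (j : ℕ)) := fun hh => hj (Fin.ext hh.symm)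
    simp [this]

@[irreducible] private def Wc (c : (Fin 5 → Bool) → Fin 2) (m : ℕ) : ℕ :=
  if c (vtx m) = 0 then 1 else 0

private lemma Wc_le (c : (Fin 5 → Bool) → Fin 2) (m : ℕ) : Wc c m ≤ 1 := by
  unfold Wc; split <;> omega

private lemma vertex_eq (c : (Fin 5 → Bool) → Fin 2)
    (h : ∀ v : Fin 5 → Bool, ∀ j : Fin 2,
      {w | (cubeGraph 5).Adj v w ∧ c w = j}.ncard = !![0,5;3,2] (c v) j) (n : ℕ) :
    Wc c (n ^^^ 1) + Wc c (n ^^^ 2) + Wc c (n ^^^ 4) + Wc c (n ^^^ 8)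
      + Wc c (n ^^^ 16) + 3 * Wc c n = 3 := by
  unfold Wc
  have hc := h (vtx n) 0
  rw [count_flip, Finset.card_filter, Fin.sum_univ_five, flip5_vtx, flip5_vtx, flip5_vtx,
    flip5_vtx, flip5_vtx] at hc
  simp only [show ((0:Fin 5):ℕ) = 0 from rfl, show ((1:Fin 5):ℕ) = 1 from rfl,
    show ((2:Fin 5):ℕ) = 2 from rfl, show ((3:Fin 5):ℕ) = 3 from rfl,
    show ((4:Fin 5):ℕ) = 4 from rfl, show (2^0:ℕ) = 1 from rfl, show (2^1:ℕ) = 2 from rfl,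
    show (2^2:ℕ) = 4 from rfl, show (2^3:ℕ) = 8 from rfl, show (2^4:ℕ) = 16 from rfl] at hc
  rcases eq_or_ne (c (vtx n)) 0 with h'|h'
  · rw [h', show (!![0,5;3,2] : Matrix (Fin 2) (Fin 2) ℕ) 0 0 = 0 from rfl] at hc
    rw [if_pos h']
    omega
  · have h1 : c (vtx n) = 1 := by omega
    rw [h1, show (!![0,5;3,2] : Matrix (Fin 2) (Fin 2) ℕ) 1 0 = 3 from rfl] at hc
    rw [if_neg h']
    omega

private lemma aux192 (s : ℤ) : 192 * s ≠ 288 := by omega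

set_option maxHeartbeats 1000000 in
/-- There is no perfect 2-colouring of the 5-cube with colour adjacency matrix
[[0,5],[3,2]]. -/
theorem no_perfect_coloring_fiveCube_0532 :
    ¬ ∃ c : (Fin 5 → Bool) → Fin 2,
      IsPerfectColoring (cubeGraph 5) c !![0,5;3,2] := by
  rintro ⟨c, -, h⟩
  have key := vertex_eq c h
  have e0 := key 0
  have e1 := key 1
  have e2 := key 2
  have e3 := key 3
  have e4 := key 4
  have e5 := key 5
  have e6 := key 6
  have e7 := key 7
  have e8 := key 8
  have e9 := key 9
  have e10 := key 10
  have e11 := key 11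
  have e12 := key 12
  have e13 := key 13
  have e14 := key 14
  have e15 := key 15
  have e16 := key 16
  have e17 := key 17
  have e18 := key 18
  have e19 := key 19
  have e20 := key 20
  have e21 := key 21
  have e22 := key 22
  have e23 := key 23
  have e24 := key 24
  have e25 := key 25
  have e26 := key 26
  have e27 := key 27
  have e28 := key 28
  have e29 := key 29
  have e30 := key 30
  have e31 := key 31
  simp only [Nat.reduceXor] at e0 e1 e2 e3 e4 e5 e6 e7 e8 e9 e10 e11 e12 e13 e14 e15 e16 e17 e18 e19 e20 e21 e22 e23 e24 e25 e26 e27 e28 e29 e30 e31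
  have f0 := congrArg (Nat.cast : ℕ → ℤ) e0
  have f1 := congrArg (Nat.cast : ℕ → ℤ) e1
  have f2 := congrArg (Nat.cast : ℕ → ℤ) e2
  have f3 := congrArg (Nat.cast : ℕ → ℤ) e3
  have f4 := congrArg (Nat.cast : ℕ → ℤ) e4
  have f5 := congrArg (Nat.cast : ℕ → ℤ) e5
  have f6 := congrArg (Nat.cast : ℕ → ℤ) e6
  have f7 := congrArg (Nat.cast : ℕ → ℤ) e7
  have f8 := congrArg (Nat.cast : ℕ → ℤ) e8
  have f9 := congrArg (Nat.cast : ℕ → ℤ) e9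
  have f10 := congrArg (Nat.cast : ℕ → ℤ) e10
  have f11 := congrArg (Nat.cast : ℕ → ℤ) e11
  have f12 := congrArg (Nat.cast : ℕ → ℤ) e12
  have f13 := congrArg (Nat.cast : ℕ → ℤ) e13
  have f14 := congrArg (Nat.cast : ℕ → ℤ) e14
  have f15 := congrArg (Nat.cast : ℕ → ℤ) e15
  have f16 := congrArg (Nat.cast : ℕ → ℤ) e16
  have f17 := congrArg (Nat.cast : ℕ → ℤ) e17
  have f18 := congrArg (Nat.cast : ℕ → ℤ) e18
  have f19 := congrArg (Nat.cast : ℕ → ℤ) e19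
  have f20 := congrArg (Nat.cast : ℕ → ℤ) e20
  have f21 := congrArg (Nat.cast : ℕ → ℤ) e21
  have f22 := congrArg (Nat.cast : ℕ → ℤ) e22
  have f23 := congrArg (Nat.cast : ℕ → ℤ) e23
  have f24 := congrArg (Nat.cast : ℕ → ℤ) e24
  have f25 := congrArg (Nat.cast : ℕ → ℤ) e25
  have f26 := congrArg (Nat.cast : ℕ → ℤ) e26
  have f27 := congrArg (Nat.cast : ℕ → ℤ) e27
  have f28 := congrArg (Nat.cast : ℕ → ℤ) e28
  have f29 := congrArg (Nat.cast : ℕ → ℤ) e29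
  have f30 := congrArg (Nat.cast : ℕ → ℤ) e30
  have f31 := congrArg (Nat.cast : ℕ → ℤ) e31
  push_cast at f0 f1 f2 f3 f4 f5 f6 f7 f8 f9 f10 f11 f12 f13 f14 f15 f16 f17 f18 f19 f20 f21 f22 f23 f24 f25 f26 f27 f28 f29 f30 f31
  have contra : (192:ℤ) * ((Wc c 0 : ℤ) + (Wc c 1 : ℤ) + (Wc c 2 : ℤ) + (Wc c 3 : ℤ)) = 288 := by
    linear_combination (45 : ℤ) * f0 + (45 : ℤ) * f1 + (45 : ℤ) * f2 + (45 : ℤ) * f3 + (-11 : ℤ) * f4 + (-11 : ℤ) * f5 + (-11 : ℤ) * f6 + (-11 : ℤ) * f7 + (-11 : ℤ) * f8 + (-11 : ℤ) * f9 + (-11 : ℤ) * f10 + (-11 : ℤ) * f11 + (5 : ℤ) * f12 + (5 : ℤ) * f13 + (5 : ℤ) * f14 + (5 : ℤ) * f15 + (-11 : ℤ) * f16 + (-11 : ℤ) * f17 + (-11 : ℤ) * f18 + (-11 : ℤ) * f19 + (5 : ℤ) * f20 + (5 : ℤ) * f21 + (5 : ℤ) * f22 + (5 : ℤ) * f23 +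 (5 : ℤ) * f24 + (5 : ℤ) * f25 + (5 : ℤ) * f26 + (5 : ℤ) * f27 + (-3 : ℤ) * f28 + (-3 : ℤ) * f29 + (-3 : ℤ) * f30 + (-3 : ℤ) * f31
  exact aux192 _ contra
end

section
/- There is no perfect 2-colouring of the 5-cube Q_5 with colour adjacency matrix [[0,5],[1,4]], and there is no perfect 2-colouring of Q_5 with colour adjacency matrix [[1,4],[2,3]]. -/
open Finset

namespace IsPerfectColoring

variable {V : Type*} [Fintype V] {m : ℕ} {G : SimpleGraph V} [DecidableRel G.Adj]
  {c : V → Fin m} {A : Matrix (Fin m) (Fin m) ℕ}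

theorem card_neighbors_of_color (hc : IsPerfectColoring G c A) (v : V) (j : Fin m) :
    #{w | G.Adj v w ∧ c w = j} = A (c v) j := by
  rw [← hc.2 v j, ← Set.ncard_coe_finset]
  simp

theorem card_color_mul_eq (hc : IsPerfectColoring G c A) (i j : Fin m) :
    #{v | c v = i} * A i j = #{v | c v = j} * A j i := by
  refine card_mul_eq_card_mul G.Adj (fun v hv => ?_) (fun w hw => ?_)
  · rw [mem_filter] at hv
    simp_rw [bipartiteAbove, filter_filter, and_comm (a := c _ = j)]
    rw [← hv.2, ← hc.card_neighbors_of_color v j]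
  · rw [mem_filter] at hw
    simp_rw [bipartiteBelow, filter_filter, G.adj_comm _ w, and_comm (a := c _ = i)]
    rw [← hw.2, ← hc.card_neighbors_of_color w i]

theorem card_color_zero_mul_add {A : Matrix (Fin 2) (Fin 2) ℕ} {c : V → Fin 2}
    (hc : IsPerfectColoring G c A) :
    #{v | c v = 0} * (A 0 1 + A 1 0) = A 1 0 * Fintype.card V := by
  have hsplit : Fintype.card V = #{v | c v = 0} + #{v | c v = 1} := by
    rw [← card_univ, card_eq_sum_card_fiberwise (f := c) (t := univ) fun _ _ => mem_univ _,
      Fin.sum_univ_two]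
  rw [hsplit, mul_add, mul_add, hc.card_color_mul_eq 0 1]
  ring

end IsPerfectColoring

/-- There is no perfect 2-colouring of the 5-cube with colour adjacency matrix
[[0,5],[1,4]], and none with colour adjacency matrix [[1,4],[2,3]]. -/
theorem no_perfect_coloring_fiveCube_0514_and_1423 :
    (¬ ∃ c : (Fin 5 → Bool) → Fin 2,
      IsPerfectColoring (cubeGraph 5) c !![0,5;1,4]) ∧
    (¬ ∃ c : (Fin 5 → Bool) → Fin 2,
      IsPerfectColoring (cubeGraph 5) c !![1,4;2,3]) := by
  classical
  constructor <;> rintro ⟨c, hc⟩ <;> have h := hc.card_color_zero_mul_add <;>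
    simp only [Matrix.of_apply, Matrix.cons_val', Matrix.cons_val_zero, Matrix.cons_val_one,
      Matrix.cons_val_fin_one, Fintype.card_pi, Fintype.card_bool, prod_const, card_univ,
      Fintype.card_fin] at h <;> omega
end

section
/- If the d-cube Q_d admits a perfect m-colouring with colour adjacency matrix A ∈ ℕ^{m×m}, then the (d+1)-cube Q_{d+1} admits a perfect m-colouring with colour adjacency matrix A + I, where I is the m×m identity matrix. -/
/-- Append a last bit to a vertex of the `d`-cube. -/
def snocB {d : ℕ} (u : Fin d → Bool) (b : Bool) : Fin (d+1) → Bool := Fin.snoc u b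


lemma adj_succ_iff {d : ℕ} (v w : Fin (d+1) → Bool) :
    (cubeGraph (d+1)).Adj v w ↔
      (Fin.init v = Fin.init w ∧ v (Fin.last d) ≠ w (Fin.last d)) ∨
      ((cubeGraph d).Adj (Fin.init v) (Fin.init w) ∧ v (Fin.last d) = w (Fin.last d)) := by
  constructor
  · rintro ⟨i, hi, hu⟩
    rcases eq_or_ne i (Fin.last d) with rfl | hne
    · left
      refine ⟨funext fun k => ?_, hi⟩
      by_contra hk
      exact (Fin.castSucc_lt_last k).ne (hu k.castSucc hk)
    · obtain ⟨k, rfl⟩ := Fin.exists_castSucc_eq.mpr hne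
      right
      refine ⟨⟨k, hi, fun k' hk' => Fin.castSucc_injective _ (hu k'.castSucc hk')⟩, ?_⟩
      by_contra hl
      exact (Fin.castSucc_lt_last k).ne' (hu (Fin.last d) hl)
  · rintro (⟨heq, hne⟩ | ⟨⟨k, hk, hku⟩, heq⟩)
    · refine ⟨Fin.last d, hne, fun i hi => ?_⟩
      by_contra hil
      obtain ⟨k, rfl⟩ := Fin.exists_castSucc_eq.mpr hil
      exact hi (congrFun heq k)
    · refine ⟨k.castSucc, hk, fun i hi => ?_⟩
      have hil : i ≠ Fin.last d := fun h => hi (h ▸ heq)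
      obtain ⟨k', rfl⟩ := Fin.exists_castSucc_eq.mpr hil
      exact congrArg Fin.castSucc (hku k' hi)

lemma snoc_init_self' {d : ℕ} (w : Fin (d+1) → Bool) : snocB (Fin.init w) (w (Fin.last d)) = w :=
  Fin.snoc_init_self w


lemma snoc_inj {d : ℕ} (b : Bool) :
    Function.Injective (fun u : Fin d → Bool => snocB u b) := by
  intro u₁ u₂ h
  have := congrArg Fin.init h
  simpa [snocB, Fin.init_snoc] using this

/-- A perfect m-colouring of the d-cube with colour adjacency matrix A yields a
perfect m-colouring of the (d+1)-cube with colour adjacency matrix A + I. -/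
theorem cube_coloring_lift_add_id {d m : ℕ} (A : Matrix (Fin m) (Fin m) ℕ)
    (h : ∃ c : (Fin d → Bool) → Fin m, IsPerfectColoring (cubeGraph d) c A) :
    ∃ c' : (Fin (d + 1) → Bool) → Fin m,
      IsPerfectColoring (cubeGraph (d + 1)) c' (A + 1) := by
  obtain ⟨c, hsurj, hcount⟩ := h
  refine ⟨fun x => c (Fin.init x), ?_, ?_⟩
  · intro j
    obtain ⟨u, hu⟩ := hsurj j
    exact ⟨snocB u true, by simpa [snocB, Fin.init_snoc] using hu⟩
  · intro v j
    have himg : ((fun u : Fin d → Bool => snocB u (v (Fin.last d))) ''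
        {u | (cubeGraph d).Adj (Fin.init v) u ∧ c u = j}).ncard = A (c (Fin.init v)) j := by
      rw [Set.ncard_image_of_injective _ (snoc_inj _)]
      exact hcount (Fin.init v) j
    rcases eq_or_ne (c (Fin.init v)) j with hj | hj
    · have hset : {w : Fin (d+1) → Bool | (cubeGraph (d+1)).Adj v w ∧ c (Fin.init w) = j}
          = ((fun u : Fin d → Bool => snocB u (v (Fin.last d))) ''
              {u | (cubeGraph d).Adj (Fin.init v) u ∧ c u = j})
            ∪ {snocB (Fin.init v) (!v (Fin.last d))} := by
        ext w
        simp only [Set.mem_setOf_eq, Set.mem_union, Set.mem_image, Set.mem_singleton_iff,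
          adj_succ_iff]
        constructor
        · rintro ⟨(⟨heq, hne⟩ | ⟨hadj, heq⟩), hc⟩
          · right
            have : w (Fin.last d) = !v (Fin.last d) := by
              cases hb : v (Fin.last d) <;> cases hb' : w (Fin.last d) <;>
                simp_all
            rw [heq, ← this]
            exact (snoc_init_self' w).symm
          · exact Or.inl ⟨Fin.init w, ⟨hadj, hc⟩, by rw [heq]; exact snoc_init_self' w⟩
        · rintro (⟨u, ⟨hadj, hc⟩, rfl⟩ | rfl)
          · exact ⟨Or.inr ⟨by simpa [snocB, Fin.init_snoc] using hadj, by simp [snocB]⟩,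
              by simpa [snocB, Fin.init_snoc] using hc⟩
          · refine ⟨Or.inl ⟨(by simp [snocB, Fin.init_snoc]), ?_⟩, by simpa [snocB, Fin.init_snoc] using hj⟩
            simp [snocB, Fin.snoc_last]
      have hdisj : Disjoint ((fun u : Fin d → Bool => snocB u (v (Fin.last d))) ''
              {u | (cubeGraph d).Adj (Fin.init v) u ∧ c u = j})
            {snocB (Fin.init v) (!v (Fin.last d))} := by
        rw [Set.disjoint_singleton_right]
        rintro ⟨u, -, hu⟩
        have := congrFun hu (Fin.last d)
        simp [snocB, Fin.snoc_last] at this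
      rw [hset, Set.ncard_union_eq hdisj (Set.toFinite _) (Set.toFinite _), himg,
        Set.ncard_singleton, Matrix.add_apply, Matrix.one_apply, if_pos hj]
    · have hset : {w : Fin (d+1) → Bool | (cubeGraph (d+1)).Adj v w ∧ c (Fin.init w) = j}
          = ((fun u : Fin d → Bool => snocB u (v (Fin.last d))) ''
              {u | (cubeGraph d).Adj (Fin.init v) u ∧ c u = j}) := by
        ext w
        simp only [Set.mem_setOf_eq, Set.mem_image, adj_succ_iff]
        constructor
        · rintro ⟨(⟨heq, hne⟩ | ⟨hadj, heq⟩), hc⟩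
          · exact absurd (heq ▸ hc) hj
          · exact ⟨Fin.init w, ⟨hadj, hc⟩, by rw [heq]; exact snoc_init_self' w⟩
        · rintro ⟨u, ⟨hadj, hc⟩, rfl⟩
          exact ⟨Or.inr ⟨by simpa [snocB, Fin.init_snoc] using hadj, by simp [snocB]⟩,
            by simpa [snocB, Fin.init_snoc] using hc⟩
      rw [hset, himg, Matrix.add_apply, Matrix.one_apply, if_neg hj]
      simp
end

section
/- Suppose the d-cube Q_d admits a perfect m-colouring with colour adjacency matrix A = (a_{ij}) ∈ ℕ^{m×m}, and let τ be a permutation of {1, …, m} with τ ∘ τ = id such that a_{τ(i) τ(j)} = a_{ij} for all i, j. Then the (d+1)-cube Q_{d+1} admits a perfect m-colouring with colour adjacency matrix A + P_τ, where P_τ is the m×m permutation matrix with (P_τ)_{ij} = 1 if j = τ(i) and (P_τ)_{ij} = 0 otherwise. -/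
/-- If the d-cube has a perfect m-colouring with colour adjacency matrix A, and τ
is an involutive permutation of the colours leaving A invariant, then the
(d+1)-cube has a perfect m-colouring with colour adjacency matrix A + P_τ, where
P_τ is the permutation matrix of τ. -/
theorem cube_coloring_lift_add_perm {d m : ℕ} (A : Matrix (Fin m) (Fin m) ℕ)
    (τ : Equiv.Perm (Fin m)) (hτ : ∀ i, τ (τ i) = i)
    (hA : ∀ i j, A (τ i) (τ j) = A i j)
    (h : ∃ c : (Fin d → Bool) → Fin m, IsPerfectColoring (cubeGraph d) c A) :
    ∃ c' : (Fin (d + 1) → Bool) → Fin m,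
      IsPerfectColoring (cubeGraph (d + 1)) c'
        (A + Matrix.of fun i j => if j = τ i then 1 else 0) := by
  obtain ⟨c, hc_surj, hc_cnt⟩ := h
  -- restriction to the first d coordinates
  set r : (Fin (d + 1) → Bool) → (Fin d → Bool) := fun x i => x i.castSucc with hr
  -- the lifted colouring
  refine ⟨fun x => if x (Fin.last d) = true then τ (c (r x)) else c (r x), ?_, ?_⟩
  · -- surjectivity
    intro j
    obtain ⟨u, hu⟩ := hc_surj j
    refine ⟨Fin.snoc u false, ?_⟩
    have h1 : (Fin.snoc u false : Fin (d+1) → Bool) (Fin.last d) = false := Fin.snoc_last ..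
    have h2 : r (Fin.snoc u false) = u := by
      funext i; simp [hr, Fin.snoc_castSucc]
    simp [h1, h2, hu]
  · intro x j
    set c' : (Fin (d + 1) → Bool) → Fin m :=
      fun x => if x (Fin.last d) = true then τ (c (r x)) else c (r x) with hc'
    set b : Bool := x (Fin.last d) with hb
    set xr : Fin d → Bool := r x with hxr
    -- characterization of adjacency in the (d+1)-cube
    have hadj : ∀ w : Fin (d+1) → Bool, (cubeGraph (d+1)).Adj x w ↔
        ((w (Fin.last d) = b ∧ (cubeGraph d).Adj xr (r w)) ∨ w = Fin.snoc xr (!b)) := by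
      intro w
      constructor
      · rintro ⟨i, hi, hu⟩
        induction i using Fin.lastCases with
        | last =>
          right
          funext k
          induction k using Fin.lastCases with
          | last =>
            have : w (Fin.last d) ≠ b := fun hh => hi (hh.symm)
            simp only [Fin.snoc_last]
            exact Bool.eq_not_iff.mpr this
          | cast k =>
            have : x k.castSucc = w k.castSucc := by
              by_contra hne
              exact (Fin.castSucc_lt_last k).ne (hu _ hne)
            simp [Fin.snoc_castSucc, hxr, hr, ← this]
        | cast i =>
          left
          constructor
          · by_contra hne
            have : x (Fin.last d) ≠ w (Fin.last d) := fun hh => hne (hh.symm)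
            exact (Fin.castSucc_lt_last i).ne' (hu _ this)
          · refine ⟨i, hi, ?_⟩
            intro k hk
            have := hu k.castSucc hk
            exact Fin.castSucc_injective _ this
      · rintro (⟨hlast, i, hi, hu⟩ | rfl)
        · refine ⟨i.castSucc, hi, ?_⟩
          intro k hk
          induction k using Fin.lastCases with
          | last => exact absurd hlast.symm hk
          | cast k => exact congrArg Fin.castSucc (hu k hk)
        · refine ⟨Fin.last d, ?_, ?_⟩
          · simp only [Fin.snoc_last, hb]; cases x (Fin.last d) <;> simp
          · intro k hk
            induction k using Fin.lastCases with
            | last => rfl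
            | cast k => simp [Fin.snoc_castSucc, hxr, hr] at hk
    -- split the neighbour set
    have hsplit : {w : Fin (d+1) → Bool | (cubeGraph (d+1)).Adj x w ∧ c' w = j} =
        ((fun u => Fin.snoc u b) '' {u | (cubeGraph d).Adj xr u ∧ c' (Fin.snoc u b) = j}) ∪
        ({w | w = Fin.snoc xr (!b) ∧ c' w = j}) := by
      ext w
      simp only [Set.mem_setOf_eq, Set.mem_union, Set.mem_image, hadj w]
      constructor
      · rintro ⟨(⟨hlast, hadj'⟩ | rfl), hcol⟩
        · left
          refine ⟨r w, ⟨hadj', ?_⟩, ?_⟩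
          · rw [show (Fin.snoc (r w) b : Fin (d+1) → Bool) = w from ?_]
            · exact hcol
            · rw [← hlast]; exact Fin.snoc_init_self w
          · rw [← hlast]; exact Fin.snoc_init_self w
        · right; exact ⟨rfl, hcol⟩
      · rintro (⟨u, ⟨hadj', hcol⟩, rfl⟩ | ⟨rfl, hcol⟩)
        · refine ⟨Or.inl ⟨Fin.snoc_last .., ?_⟩, hcol⟩
          rwa [show r (Fin.snoc u b) = u from funext fun i => Fin.snoc_castSucc ..]
        · exact ⟨Or.inr rfl, hcol⟩
    rw [hsplit, Set.ncard_union_eq ?_ (Set.toFinite _) (Set.toFinite _)]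
    · have hinj : Function.Injective (fun u : Fin d → Bool => (Fin.snoc u b : Fin (d+1) → Bool)) := by
        intro u v huv
        funext i
        have := congrFun huv i.castSucc
        simpa [Fin.snoc_castSucc] using this
      rw [Set.ncard_image_of_injective _ hinj]
      have hrsnoc : ∀ (u : Fin d → Bool) (t : Bool), r (Fin.snoc u t) = u :=
        fun u t => funext fun i => Fin.snoc_castSucc ..
      have hflipcol : c' (Fin.snoc xr (!b)) = τ (c' x) := by
        cases hbv : b <;>
          simp [hc', Fin.snoc_last, hrsnoc, hb.symm.trans hbv, hτ, hxr]
      have hsingle : {w : Fin (d+1) → Bool | w = Fin.snoc xr (!b) ∧ c' w = j}.ncard =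
          if j = τ (c' x) then 1 else 0 := by
        split_ifs with hj
        · rw [show {w : Fin (d+1) → Bool | w = Fin.snoc xr (!b) ∧ c' w = j} = {Fin.snoc xr (!b)} from ?_]
          · exact Set.ncard_singleton _
          · ext w; simp only [Set.mem_setOf_eq, Set.mem_singleton_iff]
            exact ⟨fun hh => hh.1, fun hh => ⟨hh, by rw [hh, hflipcol, hj]⟩⟩
        · rw [show {w : Fin (d+1) → Bool | w = Fin.snoc xr (!b) ∧ c' w = j} = ∅ from ?_]
          · exact Set.ncard_empty _
          · ext w; simp only [Set.mem_setOf_eq, Set.mem_empty_iff_false, iff_false, not_and]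
            rintro rfl hh; exact hj (hh.symm.trans hflipcol)
      rw [hsingle]
      have hτinj : Function.Injective τ := τ.injective
      cases hbv : b with
      | false =>
        have hcx : c' x = c xr := by simp [hc', hb.symm.trans hbv, hxr]
        have hcolset : ∀ u : Fin d → Bool, c' (Fin.snoc u false) = c u := by
          intro u; simp [hc', Fin.snoc_last, hrsnoc]
        simp only [hcolset]
        rw [hc_cnt xr j, hcx]
        simp [Matrix.add_apply, Matrix.of_apply]
      | true =>
        have hcx : c' x = τ (c xr) := by simp [hc', hb.symm.trans hbv, hxr]
        have hcolset : ∀ u : Fin d → Bool, c' (Fin.snoc u true) = τ (c u) := by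
          intro u; simp [hc', Fin.snoc_last, hrsnoc]
        simp only [hcolset]
        have hset : {u : Fin d → Bool | (cubeGraph d).Adj xr u ∧ τ (c u) = j} =
            {u | (cubeGraph d).Adj xr u ∧ c u = τ j} := by
          ext u
          simp only [Set.mem_setOf_eq, and_congr_right_iff]
          intro _
          constructor
          · rintro rfl; exact (hτ _).symm
          · rintro hh; rw [hh, hτ]
        rw [hset, hc_cnt xr (τ j), hcx]
        have hAeq : A (c xr) (τ j) = A (τ (c xr)) j := by
          rw [← hA (τ (c xr)) j, hτ]
        rw [hAeq]
        have hjiff : (j = τ (τ (c xr))) = (j = c xr) := by rw [hτ]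
        simp [Matrix.add_apply, Matrix.of_apply]
    · -- disjointness
      rw [Set.disjoint_left]
      rintro w ⟨u, _, rfl⟩ ⟨heq, _⟩
      have h1 : (Fin.snoc u b : Fin (d+1) → Bool) (Fin.last d) = b := Fin.snoc_last ..
      have h2 := congrFun heq (Fin.last d)
      simp only [Fin.snoc_last] at h2
      simp at h2
end
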